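/- arXiv:1212.0664 — 8 statements merged into one kernel-verified Lean document; each statement's English description precedes it below -/
import Mathlib

section
/- For every smooth compactly supported test function ψ : ℝ → ℝ, ∫_ℝ R_ε(x) R_ε'(x) ψ(x) dx → -(1/2) ω₀ ψ'(0) as ε → 0⁺; that is, R_ε R_ε' converges to (1/2) ω₀ δ' in the sense of distributions (where the action of δ' on ψ is -ψ'(0)). -/
open MeasureTheory Filter Set

lemma integral_deriv_zero_aux (f : ℝ → ℝ) (hf : ContDiff ℝ 1 f) (hfc : HasCompactSupport f) :
    ∫ x, deriv f x = 0 := by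
  have hint : Integrable (deriv f) :=
    (hf.continuous_deriv le_rfl).integrable_of_hasCompactSupport hfc.deriv
  have h := intervalIntegral.integral_Iic_add_Ioi (b := (0:ℝ)) hint.integrableOn hint.integrableOn
  rw [hfc.integral_Iic_deriv_eq hf 0, hfc.integral_Ioi_deriv_eq hf 0] at h
  linarith

/-- `R_ε R_ε'` converges to `(1/2) ω₀ δ'` in the sense of distributions as `ε → 0⁺`,
where the action of `δ'` on a test function `ψ` is `-ψ'(0)`. -/
theorem correction_term_mul_deriv_tendsto
    (ω : ℝ → ℝ) (hω_smooth : ContDiff ℝ (⊤ : ℕ∞) ω) (hω_even : ∀ x, ω (-x) = ω x)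
    (hω_nonneg : ∀ x, 0 ≤ ω x) (hω_supp : Function.support ω ⊆ Set.Ioo (-1) 1)
    (hω_int : ∫ x, ω x = 1)
    (ω₀ : ℝ) (hω₀ : ω₀ = ∫ x, (ω x)^2)
    (ψ : ℝ → ℝ) (hψ : ContDiff ℝ (⊤ : ℕ∞) ψ) (hψc : HasCompactSupport ψ) :
    Tendsto (fun ε : ℝ =>
        ∫ x, ((Real.sqrt ε)⁻¹ * ω ((x - 2*ε)/ε)) *
          deriv (fun y => (Real.sqrt ε)⁻¹ * ω ((y - 2*ε)/ε)) x * ψ x)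
      (nhdsWithin 0 (Set.Ioi 0)) (nhds (-(1/2) * ω₀ * deriv ψ 0)) := by
  have hωc : Continuous ω := hω_smooth.continuous
  have hωd : Differentiable ℝ ω := hω_smooth.differentiable (by simp)
  have hωc' : Continuous (deriv ω) := hω_smooth.continuous_deriv (by simp)
  have hψc' : Continuous ψ := hψ.continuous
  have hψd : Differentiable ℝ ψ := hψ.differentiable (by simp)
  have hcs : HasCompactSupport ω := by
    apply HasCompactSupport.intro (isCompact_Icc (a := (-1:ℝ)) (b := 1))
    intro x hx
    by_contra h
    exact hx (Ioo_subset_Icc_self (hω_supp (Function.mem_support.2 h)))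
  -- helper: any function vanishing where ω vanishes has compact support
  have hmono : ∀ g : ℝ → ℝ, (∀ u, ω u = 0 → g u = 0) → HasCompactSupport g := by
    intro g hg
    apply hcs.mono'
    intro u hu
    apply subset_tsupport ω
    simp only [Function.mem_support] at hu ⊢
    intro h0
    exact hu (hg u h0)
  -- ∫ ω ω' = 0
  have h0 : ∫ u, ω u * deriv ω u = 0 := by
    have hd : ∀ u, deriv (fun y => ω y * ω y) u = 2 * (ω u * deriv ω u) := by
      intro u
      have := ((hωd u).hasDerivAt.mul (hωd u).hasDerivAt).deriv
      rw [show (fun y => ω y * ω y) = ω * ω from rfl, this]; ring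
    have hz := integral_deriv_zero_aux (fun y => ω y * ω y)
      ((hω_smooth.mul hω_smooth).of_le (by simp))
      (hmono _ (fun u h => by simp [h]))
    rw [MeasureTheory.integral_congr_ae (Filter.Eventually.of_forall hd)] at hz
    rw [MeasureTheory.integral_const_mul] at hz
    linarith
  -- ∫ u ω ω' = -(1/2) ω₀
  have h1 : ∫ u, u * (ω u * deriv ω u) = -(1/2) * ω₀ := by
    have hd : ∀ u, deriv (fun y => y * (ω y * ω y)) u
        = (ω u)^2 + 2 * (u * (ω u * deriv ω u)) := by
      intro u
      have := ((hasDerivAt_id u).mul ((hωd u).hasDerivAt.mul (hωd u).hasDerivAt)).deriv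
      simp only [id] at this
      rw [show (fun y => y * (ω y * ω y)) = id * (ω * ω) from rfl, this]
      simp only [Pi.mul_apply]; ring
    have hz := integral_deriv_zero_aux (fun y => y * (ω y * ω y))
      ((contDiff_id.mul (hω_smooth.mul hω_smooth)).of_le (by simp))
      (hmono _ (fun u h => by simp [h]))
    rw [MeasureTheory.integral_congr_ae (Filter.Eventually.of_forall hd)] at hz
    have hi1 : Integrable (fun u => (ω u)^2) :=
      (hωc.pow 2).integrable_of_hasCompactSupport (hmono _ (fun u h => by simp [h]))
    have hi2 : Integrable (fun u => 2 * (u * (ω u * deriv ω u))) :=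
      ((continuous_const.mul (continuous_id.mul (hωc.mul hωc'))) :
        Continuous fun u => 2 * (u * (ω u * deriv ω u))).integrable_of_hasCompactSupport
        (hmono _ (fun u h => by simp [h]))
    rw [MeasureTheory.integral_add hi1 hi2, MeasureTheory.integral_const_mul] at hz
    rw [← hω₀] at hz
    linarith
  -- Lipschitz bound for ψ
  obtain ⟨C, hC⟩ := (hψ.continuous_deriv (by simp)).bounded_above_of_compact_support hψc.deriv
  have hC0 : 0 ≤ C := le_trans (norm_nonneg _) (hC 0)
  have hlip : ∀ a b : ℝ, |ψ a - ψ b| ≤ C * |a - b| := by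
    intro a b
    have := Convex.norm_image_sub_le_of_norm_deriv_le (f := ψ) (s := univ)
      (fun x _ => hψd x) (fun x _ => hC x) convex_univ
      (mem_univ b) (mem_univ a)
    simpa [Real.norm_eq_abs] using this
  -- pointwise convergence of difference quotients
  have hpt : ∀ u : ℝ, Tendsto (fun ε : ℝ => (ψ (ε*u + 2*ε) - ψ (2*ε))/ε)
      (nhdsWithin 0 (Set.Ioi 0)) (nhds (u * deriv ψ 0)) := by
    intro u
    have hψ0 : HasDerivAt ψ (deriv ψ 0) 0 := (hψd 0).hasDerivAt
    have hin : HasDerivAt (fun ε : ℝ => ε*u + 2*ε) (u + 2) 0 := by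
      simpa [Pi.add_def] using ((hasDerivAt_id (0:ℝ)).mul_const u).add ((hasDerivAt_id (0:ℝ)).const_mul 2)
    have h1 : HasDerivAt (fun ε : ℝ => ψ (ε*u + 2*ε)) (deriv ψ 0 * (u + 2)) 0 := by
      have hg : HasDerivAt ψ (deriv ψ 0) ((fun ε : ℝ => ε*u + 2*ε) 0) := by simpa using hψ0
      exact hg.comp 0 hin
    have hin2 : HasDerivAt (fun ε : ℝ => 2*ε) (2:ℝ) 0 := by
      simpa using (hasDerivAt_id (0:ℝ)).const_mul 2
    have h2 : HasDerivAt (fun ε : ℝ => ψ (2*ε)) (deriv ψ 0 * 2) 0 := by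
      have hg : HasDerivAt ψ (deriv ψ 0) ((fun ε : ℝ => 2*ε) 0) := by simpa using hψ0
      exact hg.comp 0 hin2
    have hsub := h1.sub h2
    have heq : deriv ψ 0 * (u + 2) - deriv ψ 0 * 2 = u * deriv ψ 0 := by ring
    rw [heq] at hsub
    rw [hasDerivAt_iff_tendsto_slope] at hsub
    have hmonol : Tendsto (slope (fun ε : ℝ => ψ (ε*u + 2*ε) - ψ (2*ε)) 0)
        (nhdsWithin 0 (Set.Ioi 0)) (nhds (u * deriv ψ 0)) :=
      hsub.mono_left (nhdsWithin_mono 0 (fun x hx => ne_of_gt hx))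
    refine hmonol.congr fun ε => ?_
    rw [slope_def_field]
    simp
  -- the transformed integral equality
  have key : ∀ ε : ℝ, ε ∈ Set.Ioi (0:ℝ) →
      (∫ u, ω u * deriv ω u * ((ψ (ε*u + 2*ε) - ψ (2*ε))/ε))
      = ∫ x, ((Real.sqrt ε)⁻¹ * ω ((x - 2*ε)/ε)) *
          deriv (fun y => (Real.sqrt ε)⁻¹ * ω ((y - 2*ε)/ε)) x * ψ x := by
    intro ε hε
    rw [Set.mem_Ioi] at hε
    have hεne : ε ≠ 0 := hε.ne'
    set G : ℝ → ℝ := fun u => ω u * deriv ω u * ψ (ε*u + 2*ε) with hG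
    have hGc : Continuous G := (hωc.mul hωc').mul (hψc'.comp (by continuity))
    have hGcs : HasCompactSupport G := hmono _ (fun u h => by simp [hG, h])
    have hGint : Integrable G := hGc.integrable_of_hasCompactSupport hGcs
    have hderiv : ∀ x : ℝ, deriv (fun y => (Real.sqrt ε)⁻¹ * ω ((y - 2*ε)/ε)) x
        = (Real.sqrt ε)⁻¹ * (deriv ω ((x - 2*ε)/ε) * ε⁻¹) := by
      intro x
      have hin : HasDerivAt (fun y : ℝ => (y - 2*ε)/ε) (1/ε) x := by
        simpa using ((hasDerivAt_id x).sub_const (2*ε)).div_const ε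
      have hg : HasDerivAt ω (deriv ω ((x - 2*ε)/ε)) ((x - 2*ε)/ε) := (hωd _).hasDerivAt
      have := ((hg.comp x hin).const_mul ((Real.sqrt ε)⁻¹)).deriv
      simpa [Function.comp, one_div] using this
    have hsq : (Real.sqrt ε)⁻¹ * (Real.sqrt ε)⁻¹ = ε⁻¹ := by
      rw [← mul_inv, Real.mul_self_sqrt hε.le]
    have hint_eq : ∀ x : ℝ, ((Real.sqrt ε)⁻¹ * ω ((x - 2*ε)/ε)) *
        deriv (fun y => (Real.sqrt ε)⁻¹ * ω ((y - 2*ε)/ε)) x * ψ x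
        = ε⁻¹ * ε⁻¹ * G ((x - 2*ε)/ε) := by
      intro x
      rw [hderiv x]
      have hx : ε * ((x - 2*ε)/ε) + 2*ε = x := by field_simp; ring
      have : ((Real.sqrt ε)⁻¹ * ω ((x - 2*ε)/ε)) *
          ((Real.sqrt ε)⁻¹ * (deriv ω ((x - 2*ε)/ε) * ε⁻¹)) * ψ x
          = ((Real.sqrt ε)⁻¹ * (Real.sqrt ε)⁻¹) * ε⁻¹ *
            (ω ((x - 2*ε)/ε) * deriv ω ((x - 2*ε)/ε) * ψ x) := by ring
      rw [this, hsq, hG]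
      simp only [hx]
    have ht : (∫ x, G ((x - 2*ε)/ε)) = ∫ x, G (x/ε) := by
      simpa [sub_eq_add_neg] using
        MeasureTheory.integral_add_right_eq_self (fun x => G (x/ε)) (-(2*ε))
    have hcd : (∫ x, G (x/ε)) = |ε| • ∫ u, G u :=
      MeasureTheory.Measure.integral_comp_div G ε
    have hrhs : (∫ x, ((Real.sqrt ε)⁻¹ * ω ((x - 2*ε)/ε)) *
        deriv (fun y => (Real.sqrt ε)⁻¹ * ω ((y - 2*ε)/ε)) x * ψ x)
        = ε⁻¹ * ∫ u, G u := by
      rw [MeasureTheory.integral_congr_ae (Filter.Eventually.of_forall hint_eq),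
        MeasureTheory.integral_const_mul, ht, hcd, abs_of_pos hε, smul_eq_mul]
      field_simp
    rw [hrhs]
    -- LHS: split the difference quotient
    have hsplit : ∀ u : ℝ, ω u * deriv ω u * ((ψ (ε*u + 2*ε) - ψ (2*ε))/ε)
        = ε⁻¹ * G u - (ε⁻¹ * ψ (2*ε)) * (ω u * deriv ω u) := by
      intro u
      rw [hG]
      field_simp
    rw [MeasureTheory.integral_congr_ae (Filter.Eventually.of_forall hsplit)]
    have hi1 : Integrable (fun u => ε⁻¹ * G u) := hGint.const_mul _
    have hi2 : Integrable (fun u => (ε⁻¹ * ψ (2*ε)) * (ω u * deriv ω u)) :=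
      ((hωc.mul hωc').integrable_of_hasCompactSupport
        (hmono _ (fun u h => by simp [h]))).const_mul _
    rw [MeasureTheory.integral_sub hi1 hi2, MeasureTheory.integral_const_mul,
      MeasureTheory.integral_const_mul, h0]
    ring
  -- dominated convergence
  have hbound_int : Integrable (fun u => C * |u| * |ω u * deriv ω u|) := by
    apply Continuous.integrable_of_hasCompactSupport
    · exact (continuous_const.mul continuous_abs).mul (hωc.mul hωc').abs
    · exact hmono _ (fun u h => by simp [h])
  have hDCT : Tendsto (fun ε : ℝ => ∫ u, ω u * deriv ω u * ((ψ (ε*u + 2*ε) - ψ (2*ε))/ε))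
      (nhdsWithin 0 (Set.Ioi 0)) (nhds (∫ u, ω u * deriv ω u * (u * deriv ψ 0))) := by
    apply MeasureTheory.tendsto_integral_filter_of_dominated_convergence
      (bound := fun u => C * |u| * |ω u * deriv ω u|)
    · apply Filter.Eventually.of_forall
      intro ε
      apply Continuous.aestronglyMeasurable
      exact (hωc.mul hωc').mul (((hψc'.comp (by continuity)).sub continuous_const).div_const ε)
    · filter_upwards [self_mem_nhdsWithin] with ε hε
      rw [Set.mem_Ioi] at hε
      apply Filter.Eventually.of_forall
      intro u
      rw [Real.norm_eq_abs, abs_mul]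
      have hq : |(ψ (ε*u + 2*ε) - ψ (2*ε))/ε| ≤ C * |u| := by
        rw [abs_div, abs_of_pos hε, div_le_iff₀ hε]
        calc |ψ (ε*u + 2*ε) - ψ (2*ε)| ≤ C * |ε*u + 2*ε - 2*ε| := hlip _ _
          _ = C * |u| * ε := by
              rw [show ε*u + 2*ε - 2*ε = ε * u by ring, abs_mul, abs_of_pos hε]; ring
      calc |ω u * deriv ω u| * |(ψ (ε*u + 2*ε) - ψ (2*ε))/ε|
          ≤ |ω u * deriv ω u| * (C * |u|) := by
            exact mul_le_mul_of_nonneg_left hq (abs_nonneg _)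
        _ = C * |u| * |ω u * deriv ω u| := by ring
    · exact hbound_int
    · apply Filter.Eventually.of_forall
      intro u
      exact (hpt u).const_mul _
  have hlim_eq : (∫ u, ω u * deriv ω u * (u * deriv ψ 0)) = -(1/2) * ω₀ * deriv ψ 0 := by
    have : ∀ u : ℝ, ω u * deriv ω u * (u * deriv ψ 0)
        = deriv ψ 0 * (u * (ω u * deriv ω u)) := by intro u; ring
    rw [MeasureTheory.integral_congr_ae (Filter.Eventually.of_forall this),
      MeasureTheory.integral_const_mul, h1]
    ring
  rw [← hlim_eq]
  exact hDCT.congr' (eventually_nhdsWithin_of_forall key)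
end

section
/- For every smooth compactly supported test function ψ : ℝ → ℝ, ∫_ℝ H_ε(x) δ_ε'(x) ψ(x) dx → -c ψ'(0) as ε → 0⁺; that is, H_ε δ_ε' converges to c δ' in the sense of distributions (where the action of δ' on ψ is -ψ'(0)), because δ_ε' is supported in the region where H_ε equals the constant c. -/
open MeasureTheory Filter Set

/-- `H_ε δ_ε'` converges to `c δ'` in the sense of distributions (the action of `δ'`
on `ψ` being `-ψ'(0)`), since `δ_ε'` is supported where `H_ε` equals the constant `c`. -/
theorem heaviside_mul_delta_deriv_tendsto
    (ω : ℝ → ℝ) (hω_smooth : ContDiff ℝ (⊤ : ℕ∞) ω) (hω_even : ∀ x, ω (-x) = ω x)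
    (hω_nonneg : ∀ x, 0 ≤ ω x) (hω_supp : Function.support ω ⊆ Set.Ioo (-1) 1)
    (hω_int : ∫ x, ω x = 1)
    (c : ℝ) (h : ℝ → ℝ) (hh : ContDiff ℝ (⊤ : ℕ∞) h)
    (hh1 : ∀ y : ℝ, y ≤ -4 → h y = 1)
    (hhc : ∀ y : ℝ, -3 ≤ y → y ≤ 3 → h y = c)
    (hh0 : ∀ y : ℝ, 4 ≤ y → h y = 0)
    (ψ : ℝ → ℝ) (hψ : ContDiff ℝ (⊤ : ℕ∞) ψ) (hψc : HasCompactSupport ψ) :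
    Tendsto (fun ε : ℝ => ∫ x, h (x/ε) * deriv (fun y => ε⁻¹ * ω ((y + 2*ε)/ε)) x * ψ x)
      (nhdsWithin 0 (Set.Ioi 0)) (nhds (-c * deriv ψ 0)) := by
  set g : ℝ → ℝ := deriv ψ with hgdef
  have hψ_cont : Continuous ψ := hψ.continuous
  have hψ_diff : Differentiable ℝ ψ := hψ.differentiable (by simp)
  have hg_cont : Continuous g := hψ.continuous_deriv (by simp)
  have hg_supp : HasCompactSupport g := hψc.deriv
  have hω_cont : Continuous ω := hω_smooth.continuous
  have hω_cs : HasCompactSupport ω := by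
    apply HasCompactSupport.intro (isCompact_Icc (a := (-1:ℝ)) (b := 1))
    intro x hx
    by_contra hne
    exact hx (Ioo_subset_Icc_self (hω_supp (Function.mem_support.2 hne)))
  have hω_integrable : Integrable ω := hω_cont.integrable_of_hasCompactSupport hω_cs
  obtain ⟨C, hC⟩ := hg_supp.exists_bound_of_continuous hg_cont
  have hC0 : 0 ≤ C := le_trans (norm_nonneg _) (hC 0)
  -- Main limit via dominated convergence
  have key : Tendsto (fun ε : ℝ => ∫ u, ω u * g (ε*u - 2*ε))
      (nhdsWithin 0 (Set.Ioi 0)) (nhds (g 0)) := by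
    have main : Tendsto (fun ε : ℝ => ∫ u, ω u * g (ε*u - 2*ε))
        (nhdsWithin 0 (Set.Ioi 0)) (nhds (∫ u, ω u * g 0)) := by
      apply tendsto_integral_filter_of_dominated_convergence (bound := fun u => ω u * C)
      · filter_upwards with ε
        exact (hω_cont.mul (hg_cont.comp (by continuity))).aestronglyMeasurable
      · filter_upwards with ε
        filter_upwards with u
        have : ‖ω u * g (ε*u - 2*ε)‖ = ω u * ‖g (ε*u - 2*ε)‖ := by
          rw [norm_mul, Real.norm_eq_abs (ω u), abs_of_nonneg (hω_nonneg u)]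
        rw [this]
        exact mul_le_mul_of_nonneg_left (hC _) (hω_nonneg u)
      · exact hω_integrable.mul_const C
      · filter_upwards with u
        have h1 : Tendsto (fun ε : ℝ => ε*u - 2*ε) (nhds 0) (nhds 0) := by
          have : Continuous (fun ε : ℝ => ε*u - 2*ε) := by continuity
          simpa using this.tendsto 0
        have h2 : Tendsto (fun ε : ℝ => g (ε*u - 2*ε)) (nhds 0) (nhds (g 0)) :=
          (hg_cont.tendsto 0).comp h1
        exact ((h2.const_mul (ω u)).mono_left nhdsWithin_le_nhds)
    have : (∫ u, ω u * g 0) = g 0 := by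
      rw [integral_mul_const, hω_int, one_mul]
    rwa [this] at main
  have key2 : Tendsto (fun ε : ℝ => -c * ∫ u, ω u * g (ε*u - 2*ε))
      (nhdsWithin 0 (Set.Ioi 0)) (nhds (-c * g 0)) := key.const_mul _
  refine Tendsto.congr' ?_ key2
  filter_upwards [self_mem_nhdsWithin] with ε (hε : (0:ℝ) < ε)
  have hεne : ε ≠ 0 := ne_of_gt hε
  set fε : ℝ → ℝ := fun y => ε⁻¹ * ω ((y + 2*ε)/ε) with hfεdef
  have hfε_smooth : ContDiff ℝ (⊤ : ℕ∞) fε :=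
    contDiff_const.mul (hω_smooth.comp ((contDiff_id.add contDiff_const).div_const ε))
  have hfε_cont : Continuous fε := hfε_smooth.continuous
  have hfd : Differentiable ℝ fε := hfε_smooth.differentiable (by simp)
  have hfε_cs : HasCompactSupport fε := by
    apply HasCompactSupport.intro (isCompact_Icc (a := -3*ε) (b := -ε))
    intro x hx
    have hω0 : ω ((x + 2*ε)/ε) = 0 := by
      by_contra hne
      have ht := hω_supp (Function.mem_support.2 hne)
      have h1 : (-1:ℝ) * ε < x + 2*ε := (lt_div_iff₀ hε).mp ht.1
      have h2 : x + 2*ε < 1 * ε := (div_lt_iff₀ hε).mp ht.2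
      exact hx ⟨by linarith, by linarith⟩
    simp [hfεdef, hω0]
  have hD_cont : Continuous (deriv fε) := hfε_smooth.continuous_deriv (by simp)
  have hD_cs : HasCompactSupport (deriv fε) := hfε_cs.deriv
  -- Step A: replace h(x/ε) by c on the support of deriv fε
  have stepA : (∫ x, h (x/ε) * deriv fε x * ψ x) = c * ∫ x, deriv fε x * ψ x := by
    rw [← integral_const_mul]
    refine integral_congr_ae (Eventually.of_forall fun x => ?_)
    dsimp only
    by_cases hd : deriv fε x = 0
    · simp [hd]
    · have ht : (x + 2*ε)/ε ∈ Icc (-1:ℝ) 1 := by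
        by_contra htc
        have hzero : deriv fε x = 0 := by
          rcases lt_or_ge ((x + 2*ε)/ε) (-1) with hlt | hge
          · have hU : IsOpen {y : ℝ | (y + 2*ε)/ε < -1} :=
              isOpen_lt (by continuity) continuous_const
            have hev : fε =ᶠ[nhds x] (fun _ => (0:ℝ)) := by
              filter_upwards [hU.mem_nhds hlt] with y (hy : (y + 2*ε)/ε < -1)
              have : ω ((y + 2*ε)/ε) = 0 := by
                by_contra hne
                have := (hω_supp (Function.mem_support.2 hne)).1
                linarith
              simp [hfεdef, this]
            rw [hev.deriv_eq]; exact deriv_const x 0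
          · have hgt : (1:ℝ) < (x + 2*ε)/ε := by
              rcases lt_or_ge (1:ℝ) ((x + 2*ε)/ε) with h' | h'
              · exact h'
              · exact absurd ⟨hge, h'⟩ htc
            have hU : IsOpen {y : ℝ | 1 < (y + 2*ε)/ε} :=
              isOpen_lt continuous_const (by continuity)
            have hev : fε =ᶠ[nhds x] (fun _ => (0:ℝ)) := by
              filter_upwards [hU.mem_nhds hgt] with y (hy : 1 < (y + 2*ε)/ε)
              have : ω ((y + 2*ε)/ε) = 0 := by
                by_contra hne
                have := (hω_supp (Function.mem_support.2 hne)).2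
                linarith
              simp [hfεdef, this]
            rw [hev.deriv_eq]; exact deriv_const x 0
        exact hd hzero
      have hxdiv : x/ε = (x + 2*ε)/ε - 2 := by field_simp; ring
      have hboundl : -3 ≤ x/ε := by rw [hxdiv]; linarith [ht.1]
      have hboundr : x/ε ≤ 3 := by rw [hxdiv]; linarith [ht.2]
      rw [hhc _ hboundl hboundr]
      ring
  -- Step C: integration by parts
  have stepC : (∫ x, deriv fε x * ψ x) = - ∫ x, fε x * g x := by
    have hu : ∀ x, HasDerivAt fε (deriv fε x) x := fun x => (hfd x).hasDerivAt
    have hv : ∀ x, HasDerivAt ψ (g x) x := fun x => (hψ_diff x).hasDerivAt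
    have hint1 : Integrable (fun x => fε x * g x) :=
      (hfε_cont.mul hg_cont).integrable_of_hasCompactSupport (hfε_cs.mul_right)
    have hint2 : Integrable (fun x => deriv fε x * ψ x) :=
      (hD_cont.mul hψ_cont).integrable_of_hasCompactSupport (hD_cs.mul_right)
    have hint3 : Integrable (fun x => fε x * ψ x) :=
      (hfε_cont.mul hψ_cont).integrable_of_hasCompactSupport (hfε_cs.mul_right)
    have := MeasureTheory.integral_mul_deriv_eq_deriv_mul_of_integrable
      (fun x _ => hu x) (fun x _ => hv x) hint1 hint2 hint3
    linarith
  -- Step D: substitution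
  have stepD : (∫ x, fε x * g x) = ∫ u, ω u * g (ε*u - 2*ε) := by
    have step1 : (∫ x, fε x * g x)
        = ∫ x, ε⁻¹ * ((fun y => ω y * g (ε*y - 2*ε)) (ε⁻¹ * (x + 2*ε))) := by
      refine integral_congr_ae (Eventually.of_forall fun x => ?_)
      have e1 : ε * (ε⁻¹ * (x + 2*ε)) - 2*ε = x := by field_simp; ring
      have e2 : (x + 2*ε)/ε = ε⁻¹ * (x + 2*ε) := by field_simp
      simp only [hfεdef, e1, e2]
      ring
    rw [step1, integral_const_mul,
      integral_add_right_eq_self (fun x => (fun y => ω y * g (ε*y - 2*ε)) (ε⁻¹ * x)) (2*ε),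
      Measure.integral_comp_inv_mul_left (fun y => ω y * g (ε*y - 2*ε)) ε,
      abs_of_pos hε, smul_eq_mul, ← mul_assoc, inv_mul_cancel₀ hεne, one_mul]
  rw [stepA, stepC, stepD]
  ring
end

section
/- (Volpert product of a shock) Let u₀, u₁, σ₁, a ∈ ℝ. For every smooth compactly supported test function ψ : ℝ → ℝ, ∫_ℝ (u₀ + u₁ H_ε(x - a)) · σ₁ H_ε'(x - a) · ψ(x) dx → -σ₁ (u₀ + u₁/2) ψ(a) as ε → 0⁺; that is, the regularized nonconservative product u ∂ₓσ for the pure jump u = u₀ + u₁ H(-(x - a)), σ = σ₀ + σ₁ H(-(x - a)) converges to -σ₁ (u₀ + u₁/2) δ_a, which is Volpert's product. -/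
open MeasureTheory Filter Set

/-- Volpert product of a shock: the regularized nonconservative product `u ∂ₓσ` for the
pure jump `u = u₀ + u₁ H(-(x-a))`, `σ = σ₀ + σ₁ H(-(x-a))` converges to
`-σ₁ (u₀ + u₁/2) δ_a` in the sense of distributions. -/
theorem volpert_product_of_shock
    (c : ℝ) (h : ℝ → ℝ) (hh : ContDiff ℝ (⊤ : ℕ∞) h)
    (hh1 : ∀ y : ℝ, y ≤ -4 → h y = 1)
    (hhc : ∀ y : ℝ, -3 ≤ y → y ≤ 3 → h y = c)
    (hh0 : ∀ y : ℝ, 4 ≤ y → h y = 0)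
    (u₀ u₁ σ₁ a : ℝ)
    (ψ : ℝ → ℝ) (hψ : ContDiff ℝ (⊤ : ℕ∞) ψ) (hψc : HasCompactSupport ψ) :
    Tendsto (fun ε : ℝ =>
        ∫ x, (u₀ + u₁ * h ((x - a)/ε)) * (σ₁ * deriv (fun y => h ((y - a)/ε)) x) * ψ x)
      (nhdsWithin 0 (Set.Ioi 0)) (nhds (-σ₁ * (u₀ + u₁/2) * ψ a)) := by
  have hd : Differentiable ℝ h := hh.differentiable (by simp)
  have hdc : Continuous (deriv h) := hh.continuous_deriv (by simp)
  -- deriv h vanishes outside [-4, 4]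
  have hderiv0 : ∀ x : ℝ, x ∉ Icc (-4 : ℝ) 4 → deriv h x = 0 := by
    intro x hx
    rw [mem_Icc, not_and_or] at hx
    rcases hx with hx | hx
    · push_neg at hx
      have hev : h =ᶠ[nhds x] fun _ => (1 : ℝ) := by
        filter_upwards [Iio_mem_nhds hx] with y hy
        exact hh1 y hy.le
      rw [hev.deriv_eq]; simp
    · push_neg at hx
      have hev : h =ᶠ[nhds x] fun _ => (0 : ℝ) := by
        filter_upwards [Ioi_mem_nhds hx] with y hy
        exact hh0 y hy.le
      rw [hev.deriv_eq]; simp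
  have hcs : HasCompactSupport (deriv h) := HasCompactSupport.intro isCompact_Icc hderiv0
  set g : ℝ → ℝ := fun y => (u₀ + u₁ * h y) * (σ₁ * deriv h y) with hgdef
  have hgc : Continuous g :=
    (continuous_const.add (continuous_const.mul hh.continuous)).mul (continuous_const.mul hdc)
  have hgcs : HasCompactSupport g := by
    apply HasCompactSupport.intro (isCompact_Icc : IsCompact (Icc (-4:ℝ) 4))
    intro x hx
    simp [hgdef, hderiv0 x hx]
  have hgint : Integrable g := hgc.integrable_of_hasCompactSupport hgcs
  -- the total mass of g
  have hG : ∀ y : ℝ, HasDerivAt (fun y => σ₁ * (u₀ * h y + u₁ * (h y * h y) / 2)) (g y) y := by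
    intro y
    have hy : HasDerivAt h (deriv h y) y := (hd y).hasDerivAt
    have := (((hy.const_mul u₀).add (((hy.mul hy).const_mul u₁).div_const 2)).const_mul σ₁)
    exact this.congr_deriv (by show _ = (u₀ + u₁ * h y) * (σ₁ * deriv h y); ring)
  have key : ∫ y, g y = -(σ₁ * (u₀ + u₁ / 2)) := by
    have h1 : ∫ y, g y = ∫ y in Set.Ioc (-5 : ℝ) 4, g y := by
      symm
      apply setIntegral_eq_integral_of_forall_compl_eq_zero
      intro x hx
      have hx' : x ∉ Icc (-4 : ℝ) 4 := by
        simp only [mem_Ioc, not_and_or, not_lt, not_le] at hx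
        simp only [mem_Icc, not_and_or, not_le]
        rcases hx with hx | hx
        · left; linarith
        · right; linarith
      simp [hgdef, hderiv0 x hx']
    have h2 : ∫ y in Set.Ioc (-5 : ℝ) 4, g y = ∫ y in (-5 : ℝ)..4, g y :=
      (intervalIntegral.integral_of_le (by norm_num)).symm
    have h3 := intervalIntegral.integral_eq_sub_of_hasDerivAt
      (f := fun y : ℝ => σ₁ * (u₀ * h y + u₁ * (h y * h y) / 2))
      (f' := g) (a := (-5:ℝ)) (b := 4) (fun x _ => hG x) (hgc.intervalIntegrable _ _)
    rw [h1, h2, h3]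
    simp only [hh0 4 le_rfl, hh1 (-5) (by norm_num)]
    ring
  -- the limiting integral
  obtain ⟨C, hC⟩ : ∃ C, ∀ x, ‖ψ x‖ ≤ C := hψc.exists_bound_of_continuous hψ.continuous
  have main : Tendsto (fun ε : ℝ => ∫ y, g y * ψ (a + ε * y)) (nhdsWithin 0 (Set.Ioi 0))
      (nhds ((∫ y, g y) * ψ a)) := by
    have hlim : Tendsto (fun ε : ℝ => ∫ y, g y * ψ (a + ε * y)) (nhdsWithin 0 (Set.Ioi 0))
        (nhds (∫ y, g y * ψ a)) := by
      apply tendsto_integral_filter_of_dominated_convergence (fun y => ‖g y‖ * C)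
      · filter_upwards with ε
        exact (hgc.mul (hψ.continuous.comp (continuous_const.add
          (continuous_const.mul continuous_id)))).aestronglyMeasurable
      · filter_upwards with ε
        filter_upwards with y
        rw [norm_mul]
        exact mul_le_mul_of_nonneg_left (hC _) (norm_nonneg _)
      · exact hgint.norm.mul_const C
      · filter_upwards with y
        have haff : Tendsto (fun ε : ℝ => a + ε * y) (nhdsWithin 0 (Set.Ioi 0)) (nhds a) := by
          have hc : Continuous (fun ε : ℝ => a + ε * y) :=
            continuous_const.add (continuous_id.mul continuous_const)
          have h0 := hc.tendsto 0
          simp only [zero_mul, add_zero] at h0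
          exact h0.mono_left nhdsWithin_le_nhds
        exact tendsto_const_nhds.mul ((hψ.continuous.tendsto a).comp haff)
    rw [show (∫ y, g y * ψ a) = (∫ y, g y) * ψ a from integral_mul_const _ _] at hlim
    exact hlim
  have heq : (fun ε : ℝ => ∫ y, g y * ψ (a + ε * y)) =ᶠ[nhdsWithin 0 (Set.Ioi 0)]
      (fun ε : ℝ => ∫ x, (u₀ + u₁ * h ((x - a)/ε)) * (σ₁ * deriv (fun y => h ((y - a)/ε)) x) * ψ x) := by
    filter_upwards [self_mem_nhdsWithin] with ε hε
    have hε0 : ε ≠ 0 := ne_of_gt hε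
    have hder : ∀ x : ℝ, deriv (fun y => h ((y - a)/ε)) x = deriv h ((x - a)/ε) * (1/ε) := by
      intro x
      have h1 : HasDerivAt (fun y : ℝ => (y - a)/ε) (1/ε) x := by
        simpa using ((hasDerivAt_id x).sub_const a).div_const ε
      exact (((hd _).hasDerivAt).comp x h1).deriv
    have hrw : (fun x : ℝ => (u₀ + u₁ * h ((x - a)/ε)) * (σ₁ * deriv (fun y => h ((y - a)/ε)) x) * ψ x)
        = fun x : ℝ => (fun y : ℝ => g y * ψ (a + ε * y) * (1/ε)) ((x - a)/ε) := by
      funext x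
      have hx : a + ε * ((x - a)/ε) = x := by field_simp; ring
      rw [hder x]
      simp only [hgdef, hx]
      ring
    rw [hrw]
    have h4 : (∫ x : ℝ, (fun y : ℝ => g y * ψ (a + ε * y) * (1/ε)) ((x - a)/ε))
        = ∫ x : ℝ, (fun z : ℝ => (fun y : ℝ => g y * ψ (a + ε * y) * (1/ε)) (z/ε)) (x - a) := by rfl
    rw [h4, integral_sub_right_eq_self (fun z : ℝ => (fun y : ℝ => g y * ψ (a + ε * y) * (1/ε)) (z/ε)) a,
      MeasureTheory.Measure.integral_comp_div (fun y : ℝ => g y * ψ (a + ε * y) * (1/ε)) ε]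
    rw [show (∫ y : ℝ, g y * ψ (a + ε * y) * (1/ε)) = (∫ y : ℝ, g y * ψ (a + ε * y)) * (1/ε) from
      integral_mul_const _ _]
    rw [abs_of_pos hε, smul_eq_mul]
    field_simp
  have hfinal : (∫ y, g y) * ψ a = -σ₁ * (u₀ + u₁/2) * ψ a := by
    rw [key]; ring
  rw [← hfinal]
  exact main.congr' heq
end

section
/- Let s, u_L, u_R, σ_L, σ_R ∈ ℝ satisfy the Rankine–Hugoniot relations for the system ∂ₜu + u ∂ₓu - ∂ₓσ = 0, ∂ₜσ + u ∂ₓσ = 0 with Volpert's product, namely -s(u_L - u_R) + (u_L² - u_R²)/2 - (σ_L - σ_R) = 0 and -s(σ_L - σ_R) + (1/2)(u_L + u_R)(σ_L - σ_R) = 0. Then σ_L = σ_R; that is, the Riemann problem for this system admits no bounded discontinuous solution with a jump in σ. -/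
/-- If `(s, u_L, u_R, σ_L, σ_R)` satisfy the Rankine–Hugoniot relations for the system
`∂ₜu + u ∂ₓu - ∂ₓσ = 0`, `∂ₜσ + u ∂ₓσ = 0` with Volpert's product, then `σ_L = σ_R`:
the Riemann problem admits no bounded discontinuous solution with a jump in `σ`. -/
theorem no_sigma_jump_with_volpert_product
    (s uL uR σL σR : ℝ)
    (h1 : -s * (uL - uR) + (uL^2 - uR^2)/2 - (σL - σR) = 0)
    (h2 : -s * (σL - σR) + (1/2) * (uL + uR) * (σL - σR) = 0) :
    σL = σR := by
  have e1 : σL - σR = (uL - uR) * ((uL + uR)/2 - s) := by linear_combination -h1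
  have e2 : ((uL + uR)/2 - s) * (σL - σR) = 0 := by linear_combination h2
  have key : (σL - σR)^2 = 0 := by
    calc (σL - σR)^2 = (uL - uR) * (((uL + uR)/2 - s) * (σL - σR)) := by
          rw [sq]; nth_rewrite 1 [e1]; ring
      _ = 0 := by rw [e2, mul_zero]
  have := pow_eq_zero_iff (n := 2) (by norm_num) |>.mp key
  linarith
end

section
/- (Theorem 4.1, first equation) For every t ≥ 0 and every smooth compactly supported test function ψ : ℝ → ℝ, ∫_ℝ (∂ₜu_ε + u_ε ∂ₓu_ε - ∂ₓσ_ε)(x, t) ψ(x) dx → 0 as ε → 0⁺; that is, the smooth ansatz (u_ε, σ_ε) satisfies the first equation of the elastodynamics system ∂ₜu + u ∂ₓu - ∂ₓσ = 0 in the weak asymptotic sense. -/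
open MeasureTheory Filter Set

private lemma deriv_zero_of_const_on_Ici {f : ℝ → ℝ} {x C : ℝ}
    (hf : DifferentiableAt ℝ f x) (hC : ∀ y, x ≤ y → f y = C) : deriv f x = 0 := by
  have h1 : HasDerivWithinAt f 0 (Ici x) x :=
    (hasDerivWithinAt_const x (Ici x) C).congr (fun y hy => hC y hy) (hC x le_rfl)
  have h2 : HasDerivWithinAt f (deriv f x) (Ici x) x := hf.hasDerivAt.hasDerivWithinAt
  have hu : UniqueDiffWithinAt ℝ (Ici x) x := uniqueDiffOn_Ici x x self_mem_Ici
  rw [← h2.derivWithin hu, h1.derivWithin hu]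

private lemma deriv_zero_of_const_on_Iic {f : ℝ → ℝ} {x C : ℝ}
    (hf : DifferentiableAt ℝ f x) (hC : ∀ y, y ≤ x → f y = C) : deriv f x = 0 := by
  have h1 : HasDerivWithinAt f 0 (Iic x) x :=
    (hasDerivWithinAt_const x (Iic x) C).congr (fun y hy => hC y hy) (hC x le_rfl)
  have h2 : HasDerivWithinAt f (deriv f x) (Iic x) x := hf.hasDerivAt.hasDerivWithinAt
  have hu : UniqueDiffWithinAt ℝ (Iic x) x := uniqueDiffOn_Iic x x self_mem_Iic
  rw [← h2.derivWithin hu, h1.derivWithin hu]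

set_option maxHeartbeats 1600000 in
/-- Theorem 4.1, first equation: the smooth ansatz `(u_ε, σ_ε)` satisfies
`∂ₜu + u ∂ₓu - ∂ₓσ = 0` in the weak asymptotic sense. -/
theorem weak_asymptotic_elastodynamics_first_eq
    (ω : ℝ → ℝ) (hω_smooth : ContDiff ℝ (⊤ : ℕ∞) ω) (hω_even : ∀ x, ω (-x) = ω x)
    (hω_nonneg : ∀ x, 0 ≤ ω x) (hω_supp : Function.support ω ⊆ Set.Ioo (-1) 1)
    (hω_int : ∫ x, ω x = 1)
    (ω₀ : ℝ) (hω₀ : ω₀ = ∫ x, (ω x)^2)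
    (u₀ σ₀ σ₁ k e0 u₁ : ℝ) (hk : 0 < k) (hu₁ : 0 < u₁) (he0 : 0 < e0)
    (hσ₁ : k^2 * u₁^2 ≤ σ₁^2)
    (c : ℝ) (hc : c = 1/2 - σ₁/u₁^2)
    (h : ℝ → ℝ) (hh : ContDiff ℝ (⊤ : ℕ∞) h)
    (hh1 : ∀ y : ℝ, y ≤ -4 → h y = 1)
    (hhc : ∀ y : ℝ, -3 ≤ y → y ≤ 3 → h y = c)
    (hh0 : ∀ y : ℝ, 4 ≤ y → h y = 0)
    (a : ℝ) (ha : a = u₀ + u₁/2 - σ₁/u₁)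
    (e : ℝ → ℝ) (he : ∀ t, e t = (σ₁^2/u₁ - k^2*u₁) * t + e0)
    (p : ℝ → ℝ) (hp : ∀ t, p t = Real.sqrt (2 * e t / ω₀))
    (u σ : ℝ → ℝ → ℝ → ℝ)
    (hu : ∀ ε x t, u ε x t =
      u₀ + u₁ * h ((x - a*t)/ε) + p t * ((Real.sqrt ε)⁻¹ * ω ((x - a*t - 2*ε)/ε)))
    (hσ : ∀ ε x t, σ ε x t =
      σ₀ + σ₁ * h ((x - a*t)/ε) + e t * (ε⁻¹ * ω ((x - a*t + 2*ε)/ε)))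
    (t : ℝ) (ht : 0 ≤ t)
    (ψ : ℝ → ℝ) (hψ : ContDiff ℝ (⊤ : ℕ∞) ψ) (hψc : HasCompactSupport ψ) :
    Tendsto (fun ε : ℝ =>
        ∫ x, (deriv (fun s => u ε x s) t
              + u ε x t * deriv (fun y => u ε y t) x
              - deriv (fun y => σ ε y t) x) * ψ x)
      (nhdsWithin 0 (Set.Ioi 0)) (nhds 0) := by
  classical
  have hu₁0 : u₁ ≠ 0 := ne_of_gt hu₁
  -- basic facts about ω
  have hωc : Continuous ω := hω_smooth.continuous
  have hωd : Differentiable ℝ ω := hω_smooth.differentiable (by simp)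
  have hω'c : Continuous (deriv ω) := hω_smooth.continuous_deriv (by simp)
  have hω0 : ∀ z : ℝ, 1 ≤ |z| → ω z = 0 := by
    intro z hz
    by_contra hne
    have hmem := hω_supp (Function.mem_support.2 hne)
    have : |z| < 1 := abs_lt.2 ⟨hmem.1, hmem.2⟩
    linarith
  have hω'0 : ∀ z : ℝ, 1 ≤ |z| → deriv ω z = 0 := by
    intro z hz
    rcases le_abs.1 hz with hz1 | hz1
    · exact deriv_zero_of_const_on_Ici (hωd z)
        (fun y hy => hω0 y (le_abs.2 (Or.inl (le_trans hz1 hy))))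
    · exact deriv_zero_of_const_on_Iic (hωd z)
        (fun y hy => hω0 y (le_abs.2 (Or.inr (by linarith))))
  -- basic facts about h
  have hhd : Differentiable ℝ h := hh.differentiable (by simp)
  have hh'c : Continuous (deriv h) := hh.continuous_deriv (by simp)
  have hh'mid : ∀ y : ℝ, -3 < y → y < 3 → deriv h y = 0 := by
    intro y h1 h2
    have hev : h =ᶠ[nhds y] fun _ => c := by
      filter_upwards [Ioo_mem_nhds h1 h2] with z hz
      exact hhc z hz.1.le hz.2.le
    rw [hev.deriv_eq, deriv_const]
  have hh'left : ∀ y : ℝ, y < -4 → deriv h y = 0 := by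
    intro y h1
    have hev : h =ᶠ[nhds y] fun _ => (1:ℝ) := by
      filter_upwards [Iio_mem_nhds h1] with z hz
      exact hh1 z hz.le
    rw [hev.deriv_eq, deriv_const]
  have hh'right : ∀ y : ℝ, 4 < y → deriv h y = 0 := by
    intro y h1
    have hev : h =ᶠ[nhds y] fun _ => (0:ℝ) := by
      filter_upwards [Ioi_mem_nhds h1] with z hz
      exact hh0 z hz.le
    rw [hev.deriv_eq, deriv_const]
  -- compact-support helpers
  have hout : ∀ z : ℝ, z ∉ Icc (-1:ℝ) 1 → 1 ≤ |z| := by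
    intro z hz
    by_contra hlt
    push_neg at hlt
    rcases abs_lt.1 hlt with ⟨h1', h2'⟩
    exact hz ⟨h1'.le, h2'.le⟩
  have hωcs : HasCompactSupport ω :=
    HasCompactSupport.intro isCompact_Icc (fun z hz => hω0 z (hout z hz))
  have hωint : Integrable ω := hωc.integrable_of_hasCompactSupport hωcs
  have hω2int : Integrable (fun z => ω z ^ 2) :=
    (hωc.pow 2).integrable_of_hasCompactSupport
      (HasCompactSupport.intro isCompact_Icc
        (fun z hz => by simp only [Pi.mul_apply, Pi.pow_apply, Pi.div_apply, Function.comp_apply]; rw [hω0 z (hout z hz)]; ring))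
  -- positivity of ω₀ and e t
  have hω₀pos : 0 < ω₀ := by
    rw [hω₀]
    have hpos : 0 < volume (Function.support ω) := by
      have h1 : (0:ℝ) < ∫ x, ω x := by rw [hω_int]; norm_num
      exact (integral_pos_iff_support_of_nonneg hω_nonneg hωint).1 h1
    have hsupp_eq : Function.support (fun z => ω z ^ 2) = Function.support ω := by
      ext z; simp [Function.mem_support, pow_eq_zero_iff]
    exact (integral_pos_iff_support_of_nonneg (fun z => sq_nonneg _) hω2int).2
      (by rw [hsupp_eq]; exact hpos)
  have hω₀0 : ω₀ ≠ 0 := ne_of_gt hω₀pos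
  have hE : 0 < e t := by
    rw [he]
    have hslope : 0 ≤ σ₁^2/u₁ - k^2*u₁ := by
      rw [sub_nonneg, le_div_iff₀ hu₁]
      nlinarith
    nlinarith [mul_nonneg hslope ht]
  have hPsq : p t ^ 2 = 2 * e t / ω₀ := by
    rw [hp]; exact Real.sq_sqrt (by positivity)
  have hed : Differentiable ℝ e := by
    have hfun : e = fun s => (σ₁^2/u₁ - k^2*u₁) * s + e0 := funext he
    rw [hfun]
    exact (differentiable_id.const_mul _).add_const e0
  have hpd : HasDerivAt p (deriv p t) t := by
    have harg : (0:ℝ) < 2 * e t / ω₀ := by positivity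
    have h2 : DifferentiableAt ℝ p t := by
      have hfun : p = fun s => Real.sqrt (2 * e s / ω₀) := funext hp
      rw [hfun]
      exact ((Real.hasDerivAt_sqrt harg.ne').comp t
        (((hed t).const_mul 2).div_const ω₀).hasDerivAt).differentiableAt
    exact h2.hasDerivAt
  -- the three profile functions (in the rescaled variable)
  set K' : ℝ → ℝ := fun y => deriv h y * (h y - 1/2) with hK'def
  set G : ℝ → ℝ := fun y => ω (y-2)^2 / ω₀ - ω (y+2) with hGdef
  set G' : ℝ → ℝ := fun y => 2 * ω (y-2) * deriv ω (y-2) / ω₀ - deriv ω (y+2) with hG'def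
  -- the key pointwise identity
  have key : ∀ ε : ℝ, 0 < ε → ∀ x : ℝ,
      deriv (fun s => u ε x s) t + u ε x t * deriv (fun y => u ε y t) x
        - deriv (fun y => σ ε y t) x
      = u₁^2 * K' ((x - a*t)/ε) * ε⁻¹
        + deriv p t * ((Real.sqrt ε)⁻¹ * ω ((x - a*t)/ε - 2))
        + e t * ε⁻¹ * ε⁻¹ * G' ((x - a*t)/ε) := by
    intro ε hε x
    have hε0 : ε ≠ 0 := hε.ne'
    have hsqpos : 0 < Real.sqrt ε := Real.sqrt_pos.2 hε
    have hsq0 : Real.sqrt ε ≠ 0 := hsqpos.ne'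
    have hqq : (Real.sqrt ε)⁻¹ * (Real.sqrt ε)⁻¹ = ε⁻¹ := by
      rw [← mul_inv, Real.mul_self_sqrt hε.le]
    have harg1 : ∀ z s : ℝ, (z - a*s - 2*ε)/ε = (z - a*s)/ε - 2 := by
      intro z s; field_simp; try ring
    have harg2 : ∀ z s : ℝ, (z - a*s + 2*ε)/ε = (z - a*s)/ε + 2 := by
      intro z s; field_simp; try ring
    -- time derivative of u
    have d1 : HasDerivAt (fun s => u ε x s)
        (u₁ * (deriv h ((x - a*t)/ε) * (-a/ε))
          + (deriv p t * ((Real.sqrt ε)⁻¹ * ω ((x - a*t)/ε - 2))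
             + p t * ((Real.sqrt ε)⁻¹ * (deriv ω ((x - a*t)/ε - 2) * (-a/ε))))) t := by
      have hfun : (fun s => u ε x s) = fun s =>
          u₀ + u₁ * h ((x - a*s)/ε) + p s * ((Real.sqrt ε)⁻¹ * ω ((x - a*s)/ε - 2)) := by
        funext s; rw [hu, harg1]
      rw [hfun]
      have hinner : HasDerivAt (fun s : ℝ => (x - a*s)/ε) (-a/ε) t := by
        simpa using (((hasDerivAt_id t).const_mul a).const_sub x).div_const ε
      have hht : HasDerivAt (fun s => h ((x - a*s)/ε)) (deriv h ((x - a*t)/ε) * (-a/ε)) t :=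
        (hhd _).hasDerivAt.comp t hinner
      have hωt : HasDerivAt (fun s => ω ((x - a*s)/ε - 2))
          (deriv ω ((x - a*t)/ε - 2) * (-a/ε)) t :=
        (hωd _).hasDerivAt.comp t (hinner.sub_const 2)
      exact ((hht.const_mul u₁).const_add u₀).add
        (hpd.mul (hωt.const_mul ((Real.sqrt ε)⁻¹)))
    -- space derivative of u
    have d2 : HasDerivAt (fun z => u ε z t)
        (u₁ * (deriv h ((x - a*t)/ε) * ε⁻¹)
          + p t * ((Real.sqrt ε)⁻¹ * (deriv ω ((x - a*t)/ε - 2) * ε⁻¹))) x := by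
      have hfun : (fun z => u ε z t) = fun z =>
          u₀ + u₁ * h ((z - a*t)/ε) + p t * ((Real.sqrt ε)⁻¹ * ω ((z - a*t)/ε - 2)) := by
        funext z; rw [hu, harg1]
      rw [hfun]
      have hinner : HasDerivAt (fun z : ℝ => (z - a*t)/ε) ε⁻¹ x := by
        simpa [one_div] using ((hasDerivAt_id x).sub_const (a*t)).div_const ε
      have hhx : HasDerivAt (fun z => h ((z - a*t)/ε)) (deriv h ((x - a*t)/ε) * ε⁻¹) x :=
        (hhd _).hasDerivAt.comp x hinner
      have hωx : HasDerivAt (fun z => ω ((z - a*t)/ε - 2))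
          (deriv ω ((x - a*t)/ε - 2) * ε⁻¹) x :=
        (hωd _).hasDerivAt.comp x (hinner.sub_const 2)
      exact ((hhx.const_mul u₁).const_add u₀).add
        ((hωx.const_mul ((Real.sqrt ε)⁻¹)).const_mul (p t))
    -- space derivative of σ
    have d3 : HasDerivAt (fun z => σ ε z t)
        (σ₁ * (deriv h ((x - a*t)/ε) * ε⁻¹)
          + e t * (ε⁻¹ * (deriv ω ((x - a*t)/ε + 2) * ε⁻¹))) x := by
      have hfun : (fun z => σ ε z t) = fun z =>
          σ₀ + σ₁ * h ((z - a*t)/ε) + e t * (ε⁻¹ * ω ((z - a*t)/ε + 2)) := by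
        funext z; rw [hσ, harg2]
      rw [hfun]
      have hinner : HasDerivAt (fun z : ℝ => (z - a*t)/ε) ε⁻¹ x := by
        simpa [one_div] using ((hasDerivAt_id x).sub_const (a*t)).div_const ε
      have hhx : HasDerivAt (fun z => h ((z - a*t)/ε)) (deriv h ((x - a*t)/ε) * ε⁻¹) x :=
        (hhd _).hasDerivAt.comp x hinner
      have hωx : HasDerivAt (fun z => ω ((z - a*t)/ε + 2))
          (deriv ω ((x - a*t)/ε + 2) * ε⁻¹) x :=
        (hωd _).hasDerivAt.comp x (hinner.add_const 2)
      exact ((hhx.const_mul σ₁).const_add σ₀).add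
        ((hωx.const_mul ε⁻¹).const_mul (e t))
    rw [d1.deriv, d2.deriv, d3.deriv, hu ε x t, harg1]
    -- vanishing products
    have hz1 : deriv h ((x - a*t)/ε) * ω ((x - a*t)/ε - 2) = 0 := by
      by_cases hW : ω ((x - a*t)/ε - 2) = 0
      · rw [hW, mul_zero]
      · have hmem := hω_supp (Function.mem_support.2 hW)
        rw [hh'mid ((x - a*t)/ε) (by linarith [hmem.1]) (by linarith [hmem.2]), zero_mul]
    have hz3 : deriv ω ((x - a*t)/ε - 2) * (h ((x - a*t)/ε) - c) = 0 := by
      by_cases hW : deriv ω ((x - a*t)/ε - 2) = 0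
      · rw [hW, zero_mul]
      · have hlt : |(x - a*t)/ε - 2| < 1 := by
          by_contra hge
          exact hW (hω'0 _ (not_lt.1 hge))
        rcases abs_lt.1 hlt with ⟨hl, hr⟩
        rw [hhc ((x - a*t)/ε) (by linarith) (by linarith), sub_self, mul_zero]
    have ha' : a * u₁ = u₀*u₁ + u₁^2/2 - σ₁ := by
      rw [ha]; field_simp
    have hc2 : a = u₀ + u₁ * c := by
      rw [ha, hc]; field_simp; ring
    simp only [hK'def, hG'def]
    linear_combination (-(deriv h ((x - a*t)/ε) * ε⁻¹)) * ha'
      + (u₁ * p t * (Real.sqrt ε)⁻¹ * ε⁻¹) * hz1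
      + (u₁ * p t * (Real.sqrt ε)⁻¹ * ε⁻¹) * hz3
      + (-(p t * (Real.sqrt ε)⁻¹ * ε⁻¹ * deriv ω ((x - a*t)/ε - 2))) * hc2
      + (p t^2 * ω ((x - a*t)/ε - 2) * deriv ω ((x - a*t)/ε - 2) * ε⁻¹) * hqq
      + (ω ((x - a*t)/ε - 2) * deriv ω ((x - a*t)/ε - 2) * ε⁻¹ * ε⁻¹) * hPsq
  -- continuity and support facts for the profile functions
  have hψd : Differentiable ℝ ψ := hψ.differentiable (by simp)
  have hψ'c : Continuous (deriv ψ) := hψ.continuous_deriv (by simp)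
  have hK'cont : Continuous K' := hh'c.mul (hh.continuous.sub continuous_const)
  have hGcont : Continuous G :=
    (((hωc.comp (continuous_id.sub continuous_const)).pow 2).div_const ω₀).sub
      (hωc.comp (continuous_id.add continuous_const))
  have hG'cont : Continuous G' :=
    (((continuous_const.mul (hωc.comp (continuous_id.sub continuous_const))).mul
        (hω'c.comp (continuous_id.sub continuous_const))).div_const ω₀).sub
      (hω'c.comp (continuous_id.add continuous_const))
  have habs1 : ∀ y : ℝ, y ∉ Icc (-5:ℝ) 5 →
      ω (y-2) = 0 ∧ deriv ω (y-2) = 0 ∧ ω (y+2) = 0 ∧ deriv ω (y+2) = 0 := by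
    intro y hy
    simp only [mem_Icc, not_and_or, not_le] at hy
    rcases hy with hy | hy
    · exact ⟨hω0 _ (le_abs.2 (Or.inr (by linarith))), hω'0 _ (le_abs.2 (Or.inr (by linarith))),
        hω0 _ (le_abs.2 (Or.inr (by linarith))), hω'0 _ (le_abs.2 (Or.inr (by linarith)))⟩
    · exact ⟨hω0 _ (le_abs.2 (Or.inl (by linarith))), hω'0 _ (le_abs.2 (Or.inl (by linarith))),
        hω0 _ (le_abs.2 (Or.inl (by linarith))), hω'0 _ (le_abs.2 (Or.inl (by linarith)))⟩
  have hK'supp : ∀ y : ℝ, y ∉ Icc (-5:ℝ) 5 → K' y = 0 := by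
    intro y hy
    simp only [mem_Icc, not_and_or, not_le] at hy
    rcases hy with hy | hy
    · simp only [hK'def]; rw [hh'left y (by linarith), zero_mul]
    · simp only [hK'def]; rw [hh'right y (by linarith), zero_mul]
  have hGsupp : ∀ y : ℝ, y ∉ Icc (-5:ℝ) 5 → G y = 0 := by
    intro y hy
    obtain ⟨h1, _, h3, _⟩ := habs1 y hy
    simp only [hGdef]; rw [h1, h3]; norm_num
  have hG'supp : ∀ y : ℝ, y ∉ Icc (-5:ℝ) 5 → G' y = 0 := by
    intro y hy
    obtain ⟨h1, _, _, h4⟩ := habs1 y hy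
    simp only [hG'def]; rw [h1, h4]; norm_num
  have hωsupp2 : ∀ y : ℝ, y ∉ Icc (-5:ℝ) 5 → ω (y-2) = 0 := fun y hy => (habs1 y hy).1
  -- the integral identity, for each fixed ε > 0
  have hIeq : ∀ ε : ℝ, 0 < ε →
      (∫ x, (deriv (fun s => u ε x s) t + u ε x t * deriv (fun y => u ε y t) x
          - deriv (fun y => σ ε y t) x) * ψ x)
      = u₁^2 * (∫ y, K' y * ψ (ε*y + a*t))
        + deriv p t * Real.sqrt ε * (∫ y, ω (y-2) * ψ (ε*y + a*t))
        - e t * (∫ y, G y * deriv ψ (ε*y + a*t)) := by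
    intro ε hε
    have hε0 : ε ≠ 0 := hε.ne'
    have hsqpos : 0 < Real.sqrt ε := Real.sqrt_pos.2 hε
    have hsq0 : Real.sqrt ε ≠ 0 := hsqpos.ne'
    have hmm : Real.sqrt ε * Real.sqrt ε = ε := Real.mul_self_sqrt hε.le
    have haff : Continuous fun y : ℝ => ε*y + a*t :=
      (continuous_const.mul continuous_id).add continuous_const
    have hψa : Continuous fun y : ℝ => ψ (ε*y + a*t) := hψ.continuous.comp haff
    set F : ℝ → ℝ := fun z =>
      (u₁^2 * K' ((z - a*t)/ε) * ε⁻¹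
        + deriv p t * ((Real.sqrt ε)⁻¹ * ω ((z - a*t)/ε - 2))
        + e t * ε⁻¹ * ε⁻¹ * G' ((z - a*t)/ε)) * ψ z with hF
    have h1 : (fun x => (deriv (fun s => u ε x s) t + u ε x t * deriv (fun y => u ε y t) x
        - deriv (fun y => σ ε y t) x) * ψ x) = F := by
      funext x
      rw [hF, key ε hε x]
    rw [h1]
    -- substitution x = ε y + a t
    have hsub : (∫ x, F x) = ε * ∫ y, F (ε*y + a*t) := by
      have h2 := MeasureTheory.Measure.integral_comp_mul_left (fun z => F (z + a*t)) ε
      have h3 : (∫ x, F (ε*x + a*t)) = |ε⁻¹| • ∫ y, F y := by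
        simpa [integral_add_right_eq_self] using h2
      rw [h3, abs_of_pos (inv_pos.2 hε), smul_eq_mul]
      field_simp
    rw [hsub]
    have harg : ∀ y : ℝ, (ε*y + a*t - a*t)/ε = y := by
      intro y; field_simp; ring
    have h4 : (fun y => F (ε*y + a*t)) = fun y =>
        u₁^2 * ε⁻¹ * (K' y * ψ (ε*y + a*t))
        + deriv p t * (Real.sqrt ε)⁻¹ * (ω (y-2) * ψ (ε*y + a*t))
        + e t * ε⁻¹ * ε⁻¹ * (G' y * ψ (ε*y + a*t)) := by
      funext y
      simp only [hF]
      rw [harg y]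
      ring
    rw [h4]
    -- integrability of the three pieces
    have int1 : Integrable (fun y => K' y * ψ (ε*y + a*t)) :=
      (hK'cont.mul hψa).integrable_of_hasCompactSupport
        (HasCompactSupport.intro isCompact_Icc
          (fun y hy => by simp only [Pi.mul_apply, Pi.pow_apply, Pi.div_apply, Function.comp_apply]; rw [hK'supp y hy, zero_mul]))
    have hωc2 : Continuous (fun y : ℝ => ω (y-2)) := hωc.comp (continuous_id.sub continuous_const)
    have int2 : Integrable (fun y => ω (y-2) * ψ (ε*y + a*t)) :=
      (hωc2.mul hψa).integrable_of_hasCompactSupport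
        (HasCompactSupport.intro isCompact_Icc
          (fun y hy => by simp only [Pi.mul_apply, Pi.pow_apply, Pi.div_apply, Function.comp_apply]; rw [hωsupp2 y hy, zero_mul]))
    have int3 : Integrable (fun y => G' y * ψ (ε*y + a*t)) :=
      (hG'cont.mul hψa).integrable_of_hasCompactSupport
        (HasCompactSupport.intro isCompact_Icc
          (fun y hy => by simp only [Pi.mul_apply, Pi.pow_apply, Pi.div_apply, Function.comp_apply]; rw [hG'supp y hy, zero_mul]))
    have intGψ' : Integrable (fun y => G y * (deriv ψ (ε*y + a*t) * ε)) :=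
      (hGcont.mul ((hψ'c.comp haff).mul continuous_const)).integrable_of_hasCompactSupport
        (HasCompactSupport.intro isCompact_Icc
          (fun y hy => by simp only [Pi.mul_apply, Pi.pow_apply, Pi.div_apply, Function.comp_apply]; rw [hGsupp y hy, zero_mul]))
    -- integration by parts for the G-term
    have hQd : ∀ y : ℝ, HasDerivAt (fun z => G z * ψ (ε*z + a*t))
        (G' y * ψ (ε*y + a*t) + G y * (deriv ψ (ε*y + a*t) * ε)) y := by
      intro y
      have hω2 : HasDerivAt (fun z : ℝ => ω (z-2)) (deriv ω (y-2)) y := by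
        simpa [Function.comp_def] using (hωd _).hasDerivAt.comp y ((hasDerivAt_id y).sub_const 2)
      have hω2b : HasDerivAt (fun z : ℝ => ω (z+2)) (deriv ω (y+2)) y := by
        simpa [Function.comp_def] using (hωd _).hasDerivAt.comp y ((hasDerivAt_id y).add_const 2)
      have hGd : HasDerivAt G (G' y) y := by
        have h5 := ((hω2.pow 2).div_const ω₀).sub hω2b
        simp only [hGdef, hG'def]
        exact h5.congr_deriv (by push_cast; ring)
      have hψd2 : HasDerivAt (fun z : ℝ => ψ (ε*z + a*t)) (deriv ψ (ε*y + a*t) * ε) y := by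
        have hlin : HasDerivAt (fun z : ℝ => ε*z + a*t) ε y := by
          simpa using ((hasDerivAt_id y).const_mul ε).add_const (a*t)
        exact (hψd _).hasDerivAt.comp y hlin
      exact hGd.mul hψd2
    have hQzero : ∀ y : ℝ, y ∉ Ioc (-7:ℝ) 7 →
        G' y * ψ (ε*y + a*t) + G y * (deriv ψ (ε*y + a*t) * ε) = 0 := by
      intro y hy
      have hy5 : y ∉ Icc (-5:ℝ) 5 := by
        simp only [mem_Ioc, not_and_or, not_le, not_lt] at hy
        simp only [mem_Icc, not_and_or, not_le]
        rcases hy with hy | hy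
        · left; linarith
        · right; linarith
      rw [hGsupp y hy5, hG'supp y hy5, zero_mul, zero_mul, add_zero]
    have hFTC : (∫ y, (G' y * ψ (ε*y + a*t) + G y * (deriv ψ (ε*y + a*t) * ε))) = 0 := by
      rw [← setIntegral_eq_integral_of_forall_compl_eq_zero hQzero,
        ← intervalIntegral.integral_of_le (by norm_num : (-7:ℝ) ≤ 7),
        intervalIntegral.integral_eq_sub_of_hasDerivAt (fun y _ => hQd y)
          (((hG'cont.mul hψa).add
            (hGcont.mul ((hψ'c.comp haff).mul continuous_const))).intervalIntegrable _ _)]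
      rw [hGsupp 7 (by norm_num), hGsupp (-7) (by norm_num)]
      ring
    have hIBP : (∫ y, G' y * ψ (ε*y + a*t)) = -(ε * ∫ y, G y * deriv ψ (ε*y + a*t)) := by
      have h6 : (∫ y, G' y * ψ (ε*y + a*t)) + (∫ y, G y * (deriv ψ (ε*y + a*t) * ε)) = 0 := by
        rw [← integral_add int3 intGψ']
        exact hFTC
      have h7 : (∫ y, G y * (deriv ψ (ε*y + a*t) * ε))
          = (∫ y, G y * deriv ψ (ε*y + a*t)) * ε := by
        rw [← integral_mul_const]
        congr 1; funext y; ring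
      rw [h7] at h6
      linarith
    have intAB : Integrable (fun y =>
        u₁^2 * ε⁻¹ * (K' y * ψ (ε*y + a*t))
        + deriv p t * (Real.sqrt ε)⁻¹ * (ω (y-2) * ψ (ε*y + a*t))) :=
      (int1.const_mul _).add (int2.const_mul _)
    rw [integral_add intAB (int3.const_mul _),
      integral_add (int1.const_mul _) (int2.const_mul _),
      integral_const_mul, integral_const_mul, integral_const_mul, hIBP]
    have hinv : (Real.sqrt ε)⁻¹ = Real.sqrt ε * ε⁻¹ := by
      field_simp; linarith
    rw [hinv]
    field_simp
    ring
  -- bounds for ψ and ψ'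
  obtain ⟨Cψ, hCψ⟩ := hψc.exists_bound_of_continuous hψ.continuous
  obtain ⟨Cψ', hCψ'⟩ := (hψc.deriv).exists_bound_of_continuous hψ'c
  -- a generic dominated-convergence statement
  have hDCT : ∀ (g : ℝ → ℝ) (φ : ℝ → ℝ), Continuous g →
      (∀ y : ℝ, y ∉ Icc (-5:ℝ) 5 → g y = 0) → Continuous φ → (∀ x, ‖φ x‖ ≤ Cψ + Cψ') →
      Tendsto (fun ε : ℝ => ∫ y, g y * φ (ε*y + a*t)) (nhdsWithin 0 (Set.Ioi 0))
        (nhds (∫ y, g y * φ (a*t))) := by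
    intro g φ hg hgs hφ hC
    have hlim : ∀ y : ℝ, Tendsto (fun ε : ℝ => g y * φ (ε*y + a*t))
        (nhdsWithin 0 (Set.Ioi 0)) (nhds (g y * φ (a*t))) := by
      intro y
      have hlin : Tendsto (fun ε : ℝ => ε*y + a*t) (nhdsWithin 0 (Set.Ioi 0)) (nhds (a*t)) := by
        have h2 : Tendsto (fun ε : ℝ => ε*y + a*t) (nhds 0) (nhds (0*y + a*t)) :=
          ((continuous_id.mul continuous_const).add continuous_const).tendsto 0
        simpa using h2.mono_left nhdsWithin_le_nhds
      exact tendsto_const_nhds.mul ((hφ.tendsto _).comp hlin)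
    apply tendsto_integral_filter_of_dominated_convergence (fun y => ‖g y‖ * (Cψ + Cψ'))
    · filter_upwards with ε
      exact (hg.mul (hφ.comp
        ((continuous_const.mul continuous_id).add continuous_const))).aestronglyMeasurable
    · filter_upwards with ε
      filter_upwards with y
      rw [norm_mul]
      exact mul_le_mul_of_nonneg_left (hC _) (norm_nonneg _)
    · exact (hg.norm.mul continuous_const).integrable_of_hasCompactSupport
        (HasCompactSupport.intro isCompact_Icc
          (fun y hy => by simp only [Pi.mul_apply, Pi.pow_apply, Pi.div_apply, Function.comp_apply]; rw [hgs y hy]; simp))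
    · filter_upwards with y
      exact hlim y
  have hbψ : ∀ x, ‖ψ x‖ ≤ Cψ + Cψ' := fun x =>
    le_trans (hCψ x) (le_add_of_nonneg_right (le_trans (norm_nonneg _) (hCψ' 0)))
  have hbψ' : ∀ x, ‖deriv ψ x‖ ≤ Cψ + Cψ' := fun x =>
    le_trans (hCψ' x) (le_add_of_nonneg_left (le_trans (norm_nonneg _) (hCψ 0)))
  have hωc2 : Continuous (fun y : ℝ => ω (y-2)) := hωc.comp (continuous_id.sub continuous_const)
  have lim1 := hDCT K' ψ hK'cont hK'supp hψ.continuous hbψ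
  have lim2 := hDCT (fun y => ω (y-2)) ψ hωc2 hωsupp2 hψ.continuous hbψ
  have lim3 := hDCT G (deriv ψ) hGcont hGsupp hψ'c hbψ'
  -- the limiting integrals vanish
  have hZ1 : (∫ y, K' y * ψ (a*t)) = 0 := by
    rw [integral_mul_const]
    have hK'zero : ∀ y : ℝ, y ∉ Ioc (-5:ℝ) 5 → K' y = 0 := by
      intro y hy
      simp only [mem_Ioc, not_and_or, not_le, not_lt] at hy
      rcases hy with hy | hy
      · simp only [hK'def]; rw [hh'left y (by linarith), zero_mul]
      · simp only [hK'def]; rw [hh'right y (by linarith), zero_mul]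
    have hKat : ∀ y : ℝ, HasDerivAt (fun z => h z^2/2 - h z/2) (K' y) y := by
      intro y
      have h5 := (((hhd y).hasDerivAt.pow 2).div_const 2).sub ((hhd y).hasDerivAt.div_const 2)
      simp only [hK'def]
      exact h5.congr_deriv (by push_cast; ring)
    have hKint : (∫ y, K' y) = 0 := by
      rw [← setIntegral_eq_integral_of_forall_compl_eq_zero hK'zero,
        ← intervalIntegral.integral_of_le (by norm_num : (-5:ℝ) ≤ 5),
        intervalIntegral.integral_eq_sub_of_hasDerivAt (fun y _ => hKat y)
          (hK'cont.intervalIntegrable _ _)]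
      rw [hh0 5 (by norm_num), hh1 (-5) (by norm_num)]
      norm_num
    rw [hKint, zero_mul]
  have hZ3 : (∫ y, G y * deriv ψ (a*t)) = 0 := by
    rw [integral_mul_const]
    have i1 : Integrable (fun y => ω (y-2)^2 / ω₀) :=
      (((hωc2.pow 2).div_const ω₀)).integrable_of_hasCompactSupport
        (HasCompactSupport.intro isCompact_Icc
          (fun y hy => by simp only [Pi.mul_apply, Pi.pow_apply, Pi.div_apply, Function.comp_apply]; rw [(habs1 y hy).1]; norm_num))
    have i2 : Integrable (fun y => ω (y+2)) :=
      (hωc.comp (continuous_id.add continuous_const)).integrable_of_hasCompactSupport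
        (HasCompactSupport.intro isCompact_Icc
          (fun y hy => (habs1 y hy).2.2.1))
    have hGint : (∫ y, G y) = 0 := by
      simp only [hGdef]
      rw [integral_sub i1 i2]
      have e1 : (∫ y, ω (y-2)^2 / ω₀) = 1 := by
        rw [integral_div]
        have e1' : (∫ y, ω (y-2)^2) = ∫ z, ω z^2 := by
          simpa using integral_sub_right_eq_self (fun z => ω z^2) (2:ℝ)
        rw [e1', ← hω₀, div_self hω₀0]
      have e2 : (∫ y, ω (y+2)) = 1 := by
        have e2' : (∫ y, ω (y+2)) = ∫ z, ω z := by
          simpa using integral_add_right_eq_self ω (2:ℝ)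
        rw [e2', hω_int]
      rw [e1, e2, sub_self]
    rw [hGint, zero_mul]
  -- assemble
  have lim2' : Tendsto (fun ε : ℝ => deriv p t * Real.sqrt ε) (nhdsWithin 0 (Set.Ioi 0))
      (nhds 0) := by
    have hs : Tendsto (fun ε : ℝ => Real.sqrt ε) (nhdsWithin 0 (Set.Ioi 0)) (nhds 0) := by
      have := Real.continuous_sqrt.tendsto 0
      simpa using this.mono_left nhdsWithin_le_nhds
    simpa using tendsto_const_nhds.mul hs
  have main : Tendsto (fun ε : ℝ =>
      u₁^2 * (∫ y, K' y * ψ (ε*y + a*t))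
      + deriv p t * Real.sqrt ε * (∫ y, ω (y-2) * ψ (ε*y + a*t))
      - e t * (∫ y, G y * deriv ψ (ε*y + a*t))) (nhdsWithin 0 (Set.Ioi 0)) (nhds 0) := by
    have l1 : Tendsto (fun ε : ℝ => u₁^2 * (∫ y, K' y * ψ (ε*y + a*t)))
        (nhdsWithin 0 (Set.Ioi 0)) (nhds (u₁^2 * (∫ y, K' y * ψ (a*t)))) :=
      tendsto_const_nhds.mul lim1
    have l2 : Tendsto (fun ε : ℝ => deriv p t * Real.sqrt ε * (∫ y, ω (y-2) * ψ (ε*y + a*t)))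
        (nhdsWithin 0 (Set.Ioi 0)) (nhds (0 * (∫ y, ω (y-2) * ψ (a*t)))) :=
      lim2'.mul lim2
    have l3 : Tendsto (fun ε : ℝ => e t * (∫ y, G y * deriv ψ (ε*y + a*t)))
        (nhdsWithin 0 (Set.Ioi 0)) (nhds (e t * (∫ y, G y * deriv ψ (a*t)))) :=
      tendsto_const_nhds.mul lim3
    have htot := (l1.add l2).sub l3
    rw [hZ1, hZ3] at htot
    simpa using htot
  exact main.congr' (eventuallyEq_of_mem self_mem_nhdsWithin
    (fun ε hε => (hIeq ε hε).symm))
end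

section
/- (Theorem 4.1, second equation) For every t ≥ 0 and every smooth compactly supported test function ψ : ℝ → ℝ, ∫_ℝ (∂ₜσ_ε + u_ε ∂ₓσ_ε - k² ∂ₓu_ε)(x, t) ψ(x) dx → 0 as ε → 0⁺; that is, the smooth ansatz (u_ε, σ_ε) satisfies the second equation of the elastodynamics system ∂ₜσ + u ∂ₓσ - k² ∂ₓu = 0 in the weak asymptotic sense. -/
open MeasureTheory Filter Set

private lemma cov_aux (f : ℝ → ℝ) (b ε : ℝ) (hε : 0 < ε) :
    ∫ x, f (b + ε * x) = ε⁻¹ * ∫ x, f x := by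
  rw [show (fun x : ℝ => f (b + ε * x)) = (fun x : ℝ => (fun z => f (b + z)) (ε * x)) from rfl,
    MeasureTheory.Measure.integral_comp_mul_left (fun z => f (b + z)) ε,
    integral_add_left_eq_self (fun z : ℝ => f z) b]
  simp [abs_of_pos (inv_pos.mpr hε), smul_eq_mul]

private lemma bound_of_cc {f : ℝ → ℝ} (hf : Continuous f) (hfc : HasCompactSupport f) :
    ∃ M : ℝ, 0 ≤ M ∧ ∀ x, |f x| ≤ M := by
  obtain ⟨x₀, hx₀⟩ := (hf.abs).exists_forall_ge_of_hasCompactSupport hfc.abs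
  exact ⟨|f x₀|, abs_nonneg _, hx₀⟩

/-- Theorem 4.1, second equation: the smooth ansatz `(u_ε, σ_ε)` satisfies
`∂ₜσ + u ∂ₓσ - k² ∂ₓu = 0` in the weak asymptotic sense. -/
theorem weak_asymptotic_elastodynamics_second_eq
    (ω : ℝ → ℝ) (hω_smooth : ContDiff ℝ (⊤ : ℕ∞) ω) (hω_even : ∀ x, ω (-x) = ω x)
    (hω_nonneg : ∀ x, 0 ≤ ω x) (hω_supp : Function.support ω ⊆ Set.Ioo (-1) 1)
    (hω_int : ∫ x, ω x = 1)
    (ω₀ : ℝ) (hω₀ : ω₀ = ∫ x, (ω x)^2)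
    (u₀ σ₀ σ₁ k e0 u₁ : ℝ) (hk : 0 < k) (hu₁ : 0 < u₁) (he0 : 0 < e0)
    (hσ₁ : k^2 * u₁^2 ≤ σ₁^2)
    (c : ℝ) (hc : c = 1/2 - σ₁/u₁^2)
    (h : ℝ → ℝ) (hh : ContDiff ℝ (⊤ : ℕ∞) h)
    (hh1 : ∀ y : ℝ, y ≤ -4 → h y = 1)
    (hhc : ∀ y : ℝ, -3 ≤ y → y ≤ 3 → h y = c)
    (hh0 : ∀ y : ℝ, 4 ≤ y → h y = 0)
    (a : ℝ) (ha : a = u₀ + u₁/2 - σ₁/u₁)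
    (e : ℝ → ℝ) (he : ∀ t, e t = (σ₁^2/u₁ - k^2*u₁) * t + e0)
    (p : ℝ → ℝ) (hp : ∀ t, p t = Real.sqrt (2 * e t / ω₀))
    (u σ : ℝ → ℝ → ℝ → ℝ)
    (hu : ∀ ε x t, u ε x t =
      u₀ + u₁ * h ((x - a*t)/ε) + p t * ((Real.sqrt ε)⁻¹ * ω ((x - a*t - 2*ε)/ε)))
    (hσ : ∀ ε x t, σ ε x t =
      σ₀ + σ₁ * h ((x - a*t)/ε) + e t * (ε⁻¹ * ω ((x - a*t + 2*ε)/ε)))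
    (t : ℝ) (ht : 0 ≤ t)
    (ψ : ℝ → ℝ) (hψ : ContDiff ℝ (⊤ : ℕ∞) ψ) (hψc : HasCompactSupport ψ) :
    Tendsto (fun ε : ℝ =>
        ∫ x, (deriv (fun s => σ ε x s) t
              + u ε x t * deriv (fun y => σ ε y t) x
              - k^2 * deriv (fun y => u ε y t) x) * ψ x)
      (nhdsWithin 0 (Set.Ioi 0)) (nhds 0) := by
  have hu₁' : u₁ ≠ 0 := ne_of_gt hu₁
  set m : ℝ := σ₁^2/u₁ - k^2*u₁ with hm
  -- basic differentiability facts
  have hhd : ∀ z : ℝ, HasDerivAt h (deriv h z) z :=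
    fun z => (hh.differentiable (by simp) z).hasDerivAt
  have hωd : ∀ z : ℝ, HasDerivAt ω (deriv ω z) z :=
    fun z => (hω_smooth.differentiable (by simp) z).hasDerivAt
  have hψd : ∀ z : ℝ, HasDerivAt ψ (deriv ψ z) z :=
    fun z => (hψ.differentiable (by simp) z).hasDerivAt
  have hh'cont : Continuous (deriv h) := hh.continuous_deriv (by simp)
  have hω'cont : Continuous (deriv ω) := hω_smooth.continuous_deriv (by simp)
  have hψ'cont : Continuous (deriv ψ) := hψ.continuous_deriv (by simp)
  -- vanishing of ω and deriv ω
  have hωz : ∀ z : ℝ, z ∉ Set.Ioo (-1:ℝ) 1 → ω z = 0 := by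
    intro z hz; by_contra hne; exact hz (hω_supp hne)
  have hω'z : ∀ z : ℝ, deriv ω z ≠ 0 → z ∈ Set.Icc (-1:ℝ) 1 := by
    intro z hz
    have h1 : z ∈ tsupport ω := support_deriv_subset hz
    have h2 : tsupport ω ⊆ Set.Icc (-1:ℝ) 1 := by
      refine (closure_mono hω_supp).trans ?_
      rw [closure_Ioo (by norm_num : (-1:ℝ) ≠ 1)]
    exact h2 h1
  -- vanishing of deriv h
  have hderiv_const : ∀ (z : ℝ) (s : Set ℝ) (v : ℝ), IsOpen s → z ∈ s →
      (∀ w ∈ s, h w = v) → deriv h z = 0 := by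
    intro z s v hs hzs hcon
    have hev : h =ᶠ[nhds z] fun _ => v :=
      Filter.eventuallyEq_of_mem (hs.mem_nhds hzs) hcon
    rw [hev.deriv_eq, deriv_const]
  have hh'mid : ∀ z : ℝ, -3 < z → z < 3 → deriv h z = 0 := fun z h1 h2 =>
    hderiv_const z (Set.Ioo (-3) 3) c isOpen_Ioo ⟨h1, h2⟩
      (fun w hw => hhc w hw.1.le hw.2.le)
  have hh'left : ∀ z : ℝ, z < -4 → deriv h z = 0 := fun z h1 =>
    hderiv_const z (Set.Iio (-4)) 1 isOpen_Iio h1 (fun w hw => hh1 w (le_of_lt hw))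
  have hh'right : ∀ z : ℝ, 4 < z → deriv h z = 0 := fun z h1 =>
    hderiv_const z (Set.Ioi 4) 0 isOpen_Ioi h1 (fun w hw => hh0 w (le_of_lt hw))
  -- the limit profile G
  set A : ℝ → ℝ := fun z => deriv h z * (σ₁*(u₀ + u₁*h z - a) - k^2*u₁) with hA
  set G : ℝ → ℝ := fun z => A z + m * ω (z+2) with hG
  have hAcont : Continuous A := by
    have h1 : Continuous fun z : ℝ => σ₁*(u₀ + u₁*h z - a) - k^2*u₁ := by
      have := hh.continuous
      fun_prop
    exact hh'cont.mul h1
  have hGcont : Continuous G := by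
    exact hAcont.add (continuous_const.mul (hω_smooth.continuous.comp
      (continuous_id.add continuous_const)))
  have hAz : ∀ z : ℝ, z ∉ Set.Icc (-5:ℝ) 5 → A z = 0 := by
    intro z hz
    rw [Set.mem_Icc, not_and_or] at hz
    have hd : deriv h z = 0 := by
      rcases hz with hz | hz
      · push_neg at hz; exact hh'left z (by linarith)
      · push_neg at hz; exact hh'right z (by linarith)
    simp [hA, hd]
  have hGz : ∀ z : ℝ, z ∉ Set.Icc (-5:ℝ) 5 → G z = 0 := by
    intro z hz
    have h1 : A z = 0 := hAz z hz
    rw [Set.mem_Icc, not_and_or] at hz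
    have h2 : ω (z+2) = 0 := by
      apply hωz
      rw [Set.mem_Ioo]
      rcases hz with hz | hz
      · push_neg at hz; intro hcon; linarith [hcon.1]
      · push_neg at hz; intro hcon; linarith [hcon.2]
    simp [hG, h1, h2]
  have hAcs : HasCompactSupport A := HasCompactSupport.intro isCompact_Icc hAz
  have hGcs : HasCompactSupport G := HasCompactSupport.intro isCompact_Icc hGz
  -- ∫ A = -m
  have hAint : ∫ z, A z = -m := by
    set Φ : ℝ → ℝ := fun z => σ₁*(u₀-a)*h z + σ₁*u₁*(h z)^2/2 - k^2*u₁*h z with hΦ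
    have hΦd : ∀ z, HasDerivAt Φ (A z) z := by
      intro z
      have d0 := hhd z
      have d1 := d0.const_mul (σ₁*(u₀-a))
      have d2 := ((d0.pow 2).const_mul (σ₁*u₁)).div_const 2
      have d3 := d0.const_mul (k^2*u₁)
      have d4 := (d1.add d2).sub d3
      refine HasDerivAt.congr_deriv d4 ?_
      simp only [hA]; ring
    have h5 : (0:ℝ) ∉ Set.Icc (-5:ℝ) 5 → False := by norm_num
    rw [← setIntegral_eq_integral_of_forall_compl_eq_zero hAz,
      MeasureTheory.integral_Icc_eq_integral_Ioc,
      ← intervalIntegral.integral_of_le (by norm_num : (-5:ℝ) ≤ 5),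
      intervalIntegral.integral_eq_sub_of_hasDerivAt (fun z _ => hΦd z)
        (hAcont.intervalIntegrable (-5) 5)]
    have e1 : h 5 = 0 := hh0 5 (by norm_num)
    have e2 : h (-5) = 1 := hh1 (-5) (by norm_num)
    have e3 : u₀ - a = σ₁/u₁ - u₁/2 := by rw [ha]; ring
    rw [hΦ]
    simp only [e1, e2]
    rw [e3, hm]
    field_simp
    ring
  -- ∫ G = 0
  have hGint : ∫ z, G z = 0 := by
    have hI1 : Integrable A := hAcont.integrable_of_hasCompactSupport hAcs
    have hI2 : Integrable (fun z : ℝ => m * ω (z+2)) := by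
      refine (Continuous.integrable_of_hasCompactSupport ?_ ?_)
      · exact continuous_const.mul (hω_smooth.continuous.comp (continuous_id.add continuous_const))
      · refine HasCompactSupport.intro (isCompact_Icc (a := (-3:ℝ)) (b := -1)) ?_
        intro z hz
        rw [Set.mem_Icc, not_and_or] at hz
        have : ω (z+2) = 0 := by
          apply hωz; rw [Set.mem_Ioo]
          rcases hz with hz | hz
          · push_neg at hz; intro hcon; linarith [hcon.1]
          · push_neg at hz; intro hcon; linarith [hcon.2]
        simp [this]
    rw [hG]
    rw [MeasureTheory.integral_add hI1 hI2, hAint, MeasureTheory.integral_const_mul,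
      show (fun z : ℝ => ω (z + 2)) = fun z : ℝ => ω (z + 2) from rfl]
    rw [integral_add_right_eq_self ω 2, hω_int]
    ring
  -- bound on deriv ψ and Lipschitz property
  obtain ⟨M, hM0, hM⟩ := bound_of_cc hψ'cont hψc.deriv
  have hψlip : ∀ x y : ℝ, |ψ y - ψ x| ≤ M * |y - x| := by
    intro x y
    have := convex_univ.norm_image_sub_le_of_norm_deriv_le
      (f := ψ) (fun z _ => (hψd z).differentiableAt)
      (fun z _ => by rw [Real.norm_eq_abs]; exact hM z) (Set.mem_univ x)
      (Set.mem_univ y)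
    simpa [Real.norm_eq_abs] using this
  -- the constant CG
  set CG : ℝ := ∫ z, |G z| * |z| with hCG
  have hGabs_cont : Continuous fun z : ℝ => |G z| * |z| := (hGcont.abs.mul continuous_abs)
  have hGabs_cs : HasCompactSupport fun z : ℝ => |G z| * |z| := by
    refine HasCompactSupport.intro (isCompact_Icc (a := (-5:ℝ)) (b := 5)) (fun z hz => ?_)
    simp [hGz z hz]
  have hGabs_int : Integrable fun z : ℝ => |G z| * |z| :=
    hGabs_cont.integrable_of_hasCompactSupport hGabs_cs
  have hCG0 : 0 ≤ CG := by
    rw [hCG]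
    apply MeasureTheory.integral_nonneg
    intro z; positivity
  -- the eventual bound
  have hbound : ∀ ε : ℝ, ε ∈ Set.Ioi (0:ℝ) →
      |∫ x, (deriv (fun s => σ ε x s) t
              + u ε x t * deriv (fun y => σ ε y t) x
              - k^2 * deriv (fun y => u ε y t) x) * ψ x|
        ≤ M * CG * ε + k^2 * |p t| * M * Real.sqrt ε := by
    intro ε hε
    rw [Set.mem_Ioi] at hε
    have hεne : ε ≠ 0 := ne_of_gt hε
    have hsε : (0:ℝ) < Real.sqrt ε := Real.sqrt_pos.mpr hε
    -- pointwise key identities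
    have K1 : ∀ z : ℝ, deriv ω (z + 2) *
        (u₀ + u₁ * h z + p t * ((Real.sqrt ε)⁻¹ * ω (z - 2)) - a) = 0 := by
      intro z
      by_cases hd : deriv ω (z + 2) = 0
      · rw [hd]; ring
      · have hz : z + 2 ∈ Set.Icc (-1:ℝ) 1 := hω'z _ hd
        rw [Set.mem_Icc] at hz
        have h1 : h z = c := hhc z (by linarith [hz.1]) (by linarith [hz.2])
        have h2 : ω (z - 2) = 0 := by
          apply hωz; rw [Set.mem_Ioo]; intro hcon; linarith [hcon.1, hz.2]
        rw [h1, h2, hc, ha]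
        field_simp
        ring
    have K2 : ∀ z : ℝ, deriv h z * ω (z - 2) = 0 := by
      intro z
      by_cases hw : ω (z - 2) = 0
      · rw [hw]; ring
      · have hz : z - 2 ∈ Set.Ioo (-1:ℝ) 1 := by
          by_contra hcon; exact hw (hωz _ hcon)
        rw [Set.mem_Ioo] at hz
        rw [hh'mid z (by linarith [hz.1]) (by linarith [hz.2])]; ring
    -- pointwise identity for the integrand
    have key : ∀ x : ℝ,
        deriv (fun s => σ ε x s) t
          + u ε x t * deriv (fun y => σ ε y t) x
          - k^2 * deriv (fun y => u ε y t) x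
        = ε⁻¹ * G ((x - a*t)/ε)
          - (k^2 * p t * ((Real.sqrt ε)⁻¹ * ε⁻¹)) * deriv ω ((x - a*t)/ε - 2) := by
      intro x
      have ar1 : (x - a*t + 2*ε)/ε = (x - a*t)/ε + 2 := by field_simp
      have ar2 : (x - a*t - 2*ε)/ε = (x - a*t)/ε - 2 := by field_simp
      -- time derivative of σ
      have hfun1 : (fun s => σ ε x s) =
          fun s => σ₀ + σ₁ * h ((x - a*s)/ε) + (m*s + e0) * (ε⁻¹ * ω ((x - a*s + 2*ε)/ε)) := by
        funext s; rw [hσ, he, hm]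
      have d1 : HasDerivAt (fun s : ℝ => (x - a*s)/ε) ((0 - a*1)/ε) t :=
        (((hasDerivAt_const t x).sub ((hasDerivAt_id t).const_mul a)).div_const ε)
      have d2 : HasDerivAt (fun s : ℝ => h ((x - a*s)/ε))
          (deriv h ((x - a*t)/ε) * ((0 - a*1)/ε)) t := (hhd _).comp t d1
      have d3 : HasDerivAt (fun s : ℝ => (x - a*s + 2*ε)/ε) ((0 - a*1)/ε) t :=
        ((((hasDerivAt_const t x).sub ((hasDerivAt_id t).const_mul a)).add_const
          (2*ε)).div_const ε)
      have d4 : HasDerivAt (fun s : ℝ => ω ((x - a*s + 2*ε)/ε))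
          (deriv ω ((x - a*t + 2*ε)/ε) * ((0 - a*1)/ε)) t := (hωd _).comp t d3
      have d5 : HasDerivAt (fun s : ℝ => m*s + e0) (m*1) t :=
        ((hasDerivAt_id t).const_mul m).add_const e0
      have d6 := d5.mul (d4.const_mul ε⁻¹)
      have d7 := ((d2.const_mul σ₁).const_add σ₀).add d6
      have Dt : deriv (fun s => σ ε x s) t =
          σ₁ * (deriv h ((x - a*t)/ε) * ((0 - a*1)/ε))
          + (m*1 * (ε⁻¹ * ω ((x - a*t + 2*ε)/ε))
             + (m*t + e0) * (ε⁻¹ * (deriv ω ((x - a*t + 2*ε)/ε) * ((0 - a*1)/ε)))) := by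
        rw [hfun1]; exact d7.deriv
      -- space derivative of σ
      have hfun2 : (fun y => σ ε y t) =
          fun y => σ₀ + σ₁ * h ((y - a*t)/ε) + (m*t + e0) * (ε⁻¹ * ω ((y - a*t + 2*ε)/ε)) := by
        funext y; rw [hσ, he, hm]
      have s1 : HasDerivAt (fun y : ℝ => (y - a*t)/ε) (1/ε) x := by
        have : HasDerivAt (fun y : ℝ => y - a*t) 1 x := (hasDerivAt_id x).sub_const (a*t)
        simpa using this.div_const ε
      have s2 : HasDerivAt (fun y : ℝ => h ((y - a*t)/ε))
          (deriv h ((x - a*t)/ε) * (1/ε)) x := by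
        have := (hhd _).comp x s1
        simpa [Function.comp_def] using this
      have s3 : HasDerivAt (fun y : ℝ => (y - a*t + 2*ε)/ε) (1/ε) x := by
        have : HasDerivAt (fun y : ℝ => (y - a*t + 2*ε)) 1 x :=
          ((hasDerivAt_id x).sub_const (a*t)).add_const (2*ε)
        simpa using this.div_const ε
      have s4 : HasDerivAt (fun y : ℝ => ω ((y - a*t + 2*ε)/ε))
          (deriv ω ((x - a*t + 2*ε)/ε) * (1/ε)) x := by
        have := (hωd _).comp x s3
        simpa [Function.comp_def] using this
      have s5 := ((s2.const_mul σ₁).const_add σ₀).add ((s4.const_mul ε⁻¹).const_mul (m*t + e0))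
      have Dx : deriv (fun y => σ ε y t) x =
          σ₁ * (deriv h ((x - a*t)/ε) * (1/ε))
          + (m*t + e0) * (ε⁻¹ * (deriv ω ((x - a*t + 2*ε)/ε) * (1/ε))) := by
        rw [hfun2]; exact s5.deriv
      -- space derivative of u
      have hfun3 : (fun y => u ε y t) =
          fun y => u₀ + u₁ * h ((y - a*t)/ε)
            + p t * ((Real.sqrt ε)⁻¹ * ω ((y - a*t - 2*ε)/ε)) := by
        funext y; rw [hu]
      have r3 : HasDerivAt (fun y : ℝ => (y - a*t - 2*ε)/ε) (1/ε) x := by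
        have : HasDerivAt (fun y : ℝ => (y - a*t - 2*ε)) 1 x :=
          ((hasDerivAt_id x).sub_const (a*t)).sub_const (2*ε)
        simpa using this.div_const ε
      have r4 : HasDerivAt (fun y : ℝ => ω ((y - a*t - 2*ε)/ε))
          (deriv ω ((x - a*t - 2*ε)/ε) * (1/ε)) x := by
        have := (hωd _).comp x r3
        simpa [Function.comp_def] using this
      have r5 := ((s2.const_mul u₁).const_add u₀).add
        ((r4.const_mul (Real.sqrt ε)⁻¹).const_mul (p t))
      have Du : deriv (fun y => u ε y t) x =
          u₁ * (deriv h ((x - a*t)/ε) * (1/ε))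
          + p t * ((Real.sqrt ε)⁻¹ * (deriv ω ((x - a*t - 2*ε)/ε) * (1/ε))) := by
        rw [hfun3]; exact r5.deriv
      rw [Dt, Dx, Du, hu, ar1, ar2, hG, hA]
      set z := (x - a*t)/ε with hz
      linear_combination ((m*t + e0) * ε⁻¹ * ε⁻¹) * K1 z
        + (σ₁ * p t * (Real.sqrt ε)⁻¹ * ε⁻¹) * K2 z
    -- rewrite the integral
    have ccont1 : Continuous fun x : ℝ => G ((x - a*t)/ε) :=
      hGcont.comp ((continuous_id.sub continuous_const).div_const ε)
    have ccont2 : Continuous fun x : ℝ => deriv ω ((x - a*t)/ε - 2) :=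
      hω'cont.comp (((continuous_id.sub continuous_const).div_const ε).sub continuous_const)
    have I1 : Integrable (fun x : ℝ => G ((x - a*t)/ε) * ψ x) :=
      (ccont1.mul hψ.continuous).integrable_of_hasCompactSupport hψc.mul_left
    have I2 : Integrable (fun x : ℝ => deriv ω ((x - a*t)/ε - 2) * ψ x) :=
      (ccont2.mul hψ.continuous).integrable_of_hasCompactSupport hψc.mul_left
    have split : (∫ x, (deriv (fun s => σ ε x s) t
              + u ε x t * deriv (fun y => σ ε y t) x
              - k^2 * deriv (fun y => u ε y t) x) * ψ x)
        = ε⁻¹ * (∫ x, G ((x - a*t)/ε) * ψ x)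
          - (k^2 * p t * ((Real.sqrt ε)⁻¹ * ε⁻¹)) * ∫ x, deriv ω ((x - a*t)/ε - 2) * ψ x := by
      have step1 : (∫ x, (deriv (fun s => σ ε x s) t
              + u ε x t * deriv (fun y => σ ε y t) x
              - k^2 * deriv (fun y => u ε y t) x) * ψ x)
          = ∫ x, (ε⁻¹ * (G ((x - a*t)/ε) * ψ x)
            - (k^2 * p t * ((Real.sqrt ε)⁻¹ * ε⁻¹)) * (deriv ω ((x - a*t)/ε - 2) * ψ x)) := by
        apply MeasureTheory.integral_congr_ae
        apply Filter.Eventually.of_forall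
        intro x
        beta_reduce
        rw [key x]
        ring
      rw [step1, MeasureTheory.integral_sub (I1.const_mul ε⁻¹)
        (I2.const_mul (k^2 * p t * ((Real.sqrt ε)⁻¹ * ε⁻¹))),
        MeasureTheory.integral_const_mul, MeasureTheory.integral_const_mul]
    -- change of variables
    have cov1 : ∫ y, G y * ψ (a*t + ε*y) = ε⁻¹ * (∫ x, G ((x - a*t)/ε) * ψ x) := by
      have := cov_aux (fun x => G ((x - a*t)/ε) * ψ x) (a*t) ε hε
      simp only [add_sub_cancel_left, mul_div_cancel_left₀ _ hεne] at this
      exact this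
    have cov2 : ∫ y, deriv ω (y - 2) * ψ (a*t + ε*y)
        = ε⁻¹ * (∫ x, deriv ω ((x - a*t)/ε - 2) * ψ x) := by
      have := cov_aux (fun x => deriv ω ((x - a*t)/ε - 2) * ψ x) (a*t) ε hε
      simp only [add_sub_cancel_left, mul_div_cancel_left₀ _ hεne] at this
      exact this
    set J1 : ℝ := ∫ y, G y * ψ (a*t + ε*y) with hJ1
    set J2 : ℝ := ∫ y, deriv ω (y - 2) * ψ (a*t + ε*y) with hJ2
    have split' : (∫ x, (deriv (fun s => σ ε x s) t
              + u ε x t * deriv (fun y => σ ε y t) x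
              - k^2 * deriv (fun y => u ε y t) x) * ψ x)
        = J1 - (k^2 * p t * (Real.sqrt ε)⁻¹) * J2 := by
      rw [split, ← cov1, cov2]
      ring
    -- bound on J1
    have hGψ_int : Integrable (fun y : ℝ => G y * (ψ (a*t + ε*y) - ψ (a*t))) := by
      refine Continuous.integrable_of_hasCompactSupport ?_ ?_
      · exact hGcont.mul ((hψ.continuous.comp
          (continuous_const.add (continuous_const.mul continuous_id))).sub continuous_const)
      · refine HasCompactSupport.intro (isCompact_Icc (a := (-5:ℝ)) (b := 5)) (fun z hz => ?_)
        simp [hGz z hz]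
    have hGψat_int : Integrable (fun y : ℝ => G y * ψ (a*t)) := by
      refine Continuous.integrable_of_hasCompactSupport (hGcont.mul continuous_const) ?_
      refine HasCompactSupport.intro (isCompact_Icc (a := (-5:ℝ)) (b := 5)) (fun z hz => ?_)
      simp [hGz z hz]
    have hJ1split : J1 = ∫ y, G y * (ψ (a*t + ε*y) - ψ (a*t)) := by
      have : J1 = (∫ y, G y * (ψ (a*t + ε*y) - ψ (a*t))) + ∫ y, G y * ψ (a*t) := by
        rw [hJ1, ← MeasureTheory.integral_add hGψ_int hGψat_int]
        apply MeasureTheory.integral_congr_ae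
        apply Filter.Eventually.of_forall
        intro y; beta_reduce; ring
      rw [this, MeasureTheory.integral_mul_const, hGint]
      ring
    have hJ1bound : |J1| ≤ M * CG * ε := by
      rw [hJ1split]
      have hbd : ∀ y : ℝ, ‖G y * (ψ (a*t + ε*y) - ψ (a*t))‖ ≤ (M * ε) * (|G y| * |y|) := by
        intro y
        rw [Real.norm_eq_abs, abs_mul]
        have h1 : |ψ (a*t + ε*y) - ψ (a*t)| ≤ M * |ε * y| := by
          have := hψlip (a*t) (a*t + ε*y)
          simpa using this
        have h2 : |ε * y| = ε * |y| := by rw [abs_mul, abs_of_pos hε]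
        calc |G y| * |ψ (a*t + ε*y) - ψ (a*t)| ≤ |G y| * (M * (ε * |y|)) := by
              apply mul_le_mul_of_nonneg_left _ (abs_nonneg _)
              rw [← h2]; exact h1
          _ = (M * ε) * (|G y| * |y|) := by ring
      have := MeasureTheory.norm_integral_le_of_norm_le
        ((hGabs_int.const_mul (M * ε))) (Filter.Eventually.of_forall hbd)
      rw [Real.norm_eq_abs] at this
      calc |∫ y, G y * (ψ (a*t + ε*y) - ψ (a*t))| ≤ ∫ y, (M * ε) * (|G y| * |y|) := this
        _ = (M * ε) * CG := by rw [MeasureTheory.integral_const_mul, hCG]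
        _ = M * CG * ε := by ring
    -- integration by parts for J2
    have dψc : ∀ y : ℝ, HasDerivAt (fun y : ℝ => ψ (a*t + ε*y))
        (deriv ψ (a*t + ε*y) * (ε*1)) y := by
      intro y
      exact (hψd _).comp y (((hasDerivAt_id y).const_mul ε).const_add (a*t))
    have dωc : ∀ y : ℝ, HasDerivAt (fun y : ℝ => ω (y - 2)) (deriv ω (y - 2) * 1) y := by
      intro y
      exact (hωd _).comp y ((hasDerivAt_id y).sub_const 2)
    set W : ℝ → ℝ := fun y => ω (y - 2) * ψ (a*t + ε*y) with hW
    set W' : ℝ → ℝ := fun y => deriv ω (y - 2) * 1 * ψ (a*t + ε*y)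
      + ω (y - 2) * (deriv ψ (a*t + ε*y) * (ε*1)) with hW'
    have hWd : ∀ y, HasDerivAt W (W' y) y := fun y => (dωc y).mul (dψc y)
    have hW'cont : Continuous W' := by
      refine Continuous.add ?_ ?_
      · exact ((hω'cont.comp (continuous_id.sub continuous_const)).mul
          continuous_const).mul (hψ.continuous.comp
            (continuous_const.add (continuous_const.mul continuous_id)))
      · exact (hω_smooth.continuous.comp (continuous_id.sub continuous_const)).mul
          ((hψ'cont.comp (continuous_const.add (continuous_const.mul continuous_id))).mul
            continuous_const)
    have hωsz : ∀ y : ℝ, y ∉ Set.Icc (0:ℝ) 4 → ω (y - 2) = 0 := by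
      intro y hy
      rw [Set.mem_Icc, not_and_or] at hy
      apply hωz; rw [Set.mem_Ioo]
      rcases hy with hy | hy
      · push_neg at hy; intro hcon; linarith [hcon.1]
      · push_neg at hy; intro hcon; linarith [hcon.2]
    have hω'sz : ∀ y : ℝ, y ∉ Set.Icc (0:ℝ) 4 → deriv ω (y - 2) = 0 := by
      intro y hy
      by_contra hne
      have := hω'z _ hne
      rw [Set.mem_Icc] at this hy
      rw [not_and_or] at hy
      rcases hy with hy | hy
      · push_neg at hy; linarith [this.1]
      · push_neg at hy; linarith [this.2]
    have hW'z : ∀ y : ℝ, y ∉ Set.Icc (0:ℝ) 4 → W' y = 0 := by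
      intro y hy
      simp [hW', hωsz y hy, hω'sz y hy]
    have hW'int0 : ∫ y, W' y = 0 := by
      rw [← setIntegral_eq_integral_of_forall_compl_eq_zero hW'z,
        MeasureTheory.integral_Icc_eq_integral_Ioc,
        ← intervalIntegral.integral_of_le (by norm_num : (0:ℝ) ≤ 4),
        intervalIntegral.integral_eq_sub_of_hasDerivAt (fun y _ => hWd y)
          (hW'cont.intervalIntegrable 0 4)]
      have w1 : ω (2 : ℝ) = 0 := by
        apply hωz; rw [Set.mem_Ioo]; norm_num
      have w2 : ω (-2 : ℝ) = 0 := by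
        apply hωz; rw [Set.mem_Ioo]; norm_num
      norm_num [hW, w1, w2]
    have hWsub_int : Integrable (fun y : ℝ => ω (y - 2) * (deriv ψ (a*t + ε*y) * (ε*1))) := by
      refine Continuous.integrable_of_hasCompactSupport ?_ ?_
      · exact (hω_smooth.continuous.comp (continuous_id.sub continuous_const)).mul
          ((hψ'cont.comp (continuous_const.add (continuous_const.mul continuous_id))).mul
            continuous_const)
      · exact HasCompactSupport.intro (isCompact_Icc (a := (0:ℝ)) (b := 4))
          (fun y hy => by simp [hωsz y hy])
    have hW'int : Integrable W' :=
      hW'cont.integrable_of_hasCompactSupport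
        (HasCompactSupport.intro isCompact_Icc hW'z)
    have hJ2eq : J2 = - ∫ y, ω (y - 2) * (deriv ψ (a*t + ε*y) * (ε*1)) := by
      have : J2 = (∫ y, W' y) - ∫ y, ω (y - 2) * (deriv ψ (a*t + ε*y) * (ε*1)) := by
        rw [hJ2, ← MeasureTheory.integral_sub hW'int hWsub_int]
        apply MeasureTheory.integral_congr_ae
        apply Filter.Eventually.of_forall
        intro y
        beta_reduce
        simp only [hW']
        ring
      rw [this, hW'int0]; ring
    have hωs_int : Integrable (fun y : ℝ => ω (y - 2)) := by
      refine Continuous.integrable_of_hasCompactSupport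
        (hω_smooth.continuous.comp (continuous_id.sub continuous_const)) ?_
      exact HasCompactSupport.intro isCompact_Icc (fun y hy => hωsz y hy)
    have hωs_int1 : ∫ y, ω (y - 2) = 1 := by
      have : (fun y : ℝ => ω (y - 2)) = fun y : ℝ => ω (y + (-2)) := by
        funext y; rw [sub_eq_add_neg]
      rw [this, integral_add_right_eq_self ω (-2), hω_int]
    have hJ2bound : |J2| ≤ ε * M := by
      rw [hJ2eq, abs_neg]
      have hbd : ∀ y : ℝ, ‖ω (y - 2) * (deriv ψ (a*t + ε*y) * (ε*1))‖
          ≤ (M * ε) * ω (y - 2) := by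
        intro y
        rw [Real.norm_eq_abs, abs_mul, abs_of_nonneg (hω_nonneg _)]
        calc ω (y - 2) * |deriv ψ (a*t + ε*y) * (ε*1)|
            ≤ ω (y - 2) * (M * ε) := by
              apply mul_le_mul_of_nonneg_left _ (hω_nonneg _)
              rw [abs_mul, abs_of_pos (by simpa using hε : (0:ℝ) < ε * 1)]
              calc |deriv ψ (a*t + ε*y)| * (ε*1) ≤ M * (ε*1) := by
                    apply mul_le_mul_of_nonneg_right (hM _) (by positivity)
                _ = M * ε := by ring
          _ = (M * ε) * ω (y - 2) := by ring
      have := MeasureTheory.norm_integral_le_of_norm_le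
        (hωs_int.const_mul (M * ε)) (Filter.Eventually.of_forall hbd)
      rw [Real.norm_eq_abs] at this
      calc |∫ y, ω (y - 2) * (deriv ψ (a*t + ε*y) * (ε*1))|
          ≤ ∫ y, (M * ε) * ω (y - 2) := this
        _ = (M * ε) * 1 := by rw [MeasureTheory.integral_const_mul, hωs_int1]
        _ = ε * M := by ring
    -- final bound
    rw [split']
    have hsqne : Real.sqrt ε ≠ 0 := ne_of_gt hsε
    have hsqeq : (Real.sqrt ε)⁻¹ * ε = Real.sqrt ε := by
      rw [← Real.mul_self_sqrt hε.le]
      field_simp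
      rw [Real.sqrt_sq hsε.le]
    calc |J1 - (k^2 * p t * (Real.sqrt ε)⁻¹) * J2|
        ≤ |J1| + |(k^2 * p t * (Real.sqrt ε)⁻¹) * J2| := abs_sub _ _
      _ ≤ M * CG * ε + k^2 * |p t| * M * Real.sqrt ε := by
          apply add_le_add hJ1bound
          rw [abs_mul]
          have h1 : |k^2 * p t * (Real.sqrt ε)⁻¹| = k^2 * |p t| * (Real.sqrt ε)⁻¹ := by
            rw [abs_mul, abs_mul, abs_of_pos (by positivity : (0:ℝ) < k^2),
              abs_of_pos (inv_pos.mpr hsε)]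
          rw [h1]
          calc k^2 * |p t| * (Real.sqrt ε)⁻¹ * |J2|
              ≤ k^2 * |p t| * (Real.sqrt ε)⁻¹ * (ε * M) := by
                apply mul_le_mul_of_nonneg_left hJ2bound (by positivity)
            _ = k^2 * |p t| * M * ((Real.sqrt ε)⁻¹ * ε) := by ring
            _ = k^2 * |p t| * M * Real.sqrt ε := by rw [hsqeq]
  -- conclude via squeeze
  have hbnd_tendsto : Tendsto (fun ε : ℝ => M * CG * ε + k^2 * |p t| * M * Real.sqrt ε)
      (nhdsWithin 0 (Set.Ioi 0)) (nhds 0) := by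
    have hcont : Continuous fun ε : ℝ => M * CG * ε + k^2 * |p t| * M * Real.sqrt ε := by
      exact (continuous_const.mul continuous_id).add
        (continuous_const.mul Real.continuous_sqrt)
    have := hcont.tendsto 0
    simp only [Real.sqrt_zero, mul_zero, add_zero, id_eq] at this
    exact this.mono_left nhdsWithin_le_nhds
  apply squeeze_zero_norm' _ hbnd_tendsto
  filter_upwards [self_mem_nhdsWithin] with ε hε
  rw [Real.norm_eq_abs]
  exact hbound ε hε
end

section
/- (Theorem 4.5, first equation) For every t ≥ 0 and every smooth compactly supported test function ψ : ℝ → ℝ, ∫_ℝ (∂ₜu_ε + u_ε ∂ₓu_ε - ∂ₓσ_ε)(x, t) ψ(x) dx → 0 as ε → 0⁺; that is, the smooth ansatz (u_ε, σ_ε) satisfies the first equation of the nonstrictly hyperbolic system ∂ₜu + u ∂ₓu - ∂ₓσ = 0 in the weak asymptotic sense. -/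
open MeasureTheory Filter Set

private lemma integral_deriv_zero {f : ℝ → ℝ} (hf : ContDiff ℝ 1 f)
    (hs : HasCompactSupport f) : ∫ x, deriv f x = 0 := by
  have hint : Integrable (deriv f) :=
    (hf.continuous_deriv le_rfl).integrable_of_hasCompactSupport hs.deriv
  have h0 := intervalIntegral.integral_Iic_add_Ioi (b := (0:ℝ)) hint.integrableOn hint.integrableOn
  rw [hs.integral_Iic_deriv_eq hf 0, hs.integral_Ioi_deriv_eq hf 0] at h0
  linarith

private lemma int_ccs {f g : ℝ → ℝ} (hf : Continuous f) (hfs : HasCompactSupport f)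
    (hg : Continuous g) : Integrable (fun y => f y * g y) :=
  (hf.mul hg).integrable_of_hasCompactSupport (hfs.mul_right)

private lemma cov {k : ℝ → ℝ} {ε : ℝ} (b : ℝ) (hε : 0 < ε) :
    ∫ x, k ((x - b)/ε) = ε * ∫ y, k y := by
  have h1 : (fun x : ℝ => k ((x - b)/ε)) = fun x : ℝ => (fun z => k (z/ε)) (x + -b) := by
    funext x; simp [sub_eq_add_neg]
  rw [h1, integral_add_right_eq_self (fun z => k (z/ε)) (-b),
    MeasureTheory.Measure.integral_comp_div k ε, abs_of_pos hε, smul_eq_mul]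

private lemma tendsto_int_aux {f g : ℝ → ℝ} (hf : Continuous f) (hfs : HasCompactSupport f)
    (hg : Continuous g) (C : ℝ) (hgb : ∀ x, ‖g x‖ ≤ C) (b : ℝ) :
    Tendsto (fun ε : ℝ => ∫ y, f y * g (ε * y + b)) (nhdsWithin 0 (Set.Ioi 0))
      (nhds (∫ y, f y * g b)) := by
  apply tendsto_integral_filter_of_dominated_convergence (fun y => ‖f y‖ * C)
  · filter_upwards with ε
    exact (hf.mul (hg.comp (by continuity))).aestronglyMeasurable
  · filter_upwards with ε
    filter_upwards with y
    rw [norm_mul]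
    exact mul_le_mul_of_nonneg_left (hgb _) (norm_nonneg _)
  · exact (hf.norm.integrable_of_hasCompactSupport hfs.norm).mul_const C
  · filter_upwards with y
    have h1 : Tendsto (fun ε : ℝ => ε * y + b) (nhdsWithin 0 (Set.Ioi 0)) (nhds b) := by
      have h2 : Tendsto (fun ε : ℝ => ε * y + b) (nhds 0) (nhds (0 * y + b)) :=
        ((continuous_id.mul continuous_const).add continuous_const).tendsto 0
      simpa using h2.mono_left nhdsWithin_le_nhds
    exact tendsto_const_nhds.mul ((hg.tendsto b).comp h1)

set_option maxHeartbeats 1000000 in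
/-- Theorem 4.5, first equation: the smooth ansatz `(u_ε, σ_ε)` satisfies
`∂ₜu + u ∂ₓu - ∂ₓσ = 0` (first equation of the nonstrictly hyperbolic system) in the
weak asymptotic sense. -/
theorem weak_asymptotic_nonstrict_first_eq
    (ω : ℝ → ℝ) (hω_smooth : ContDiff ℝ (⊤ : ℕ∞) ω) (hω_even : ∀ x, ω (-x) = ω x)
    (hω_nonneg : ∀ x, 0 ≤ ω x) (hω_supp : Function.support ω ⊆ Set.Ioo (-1) 1)
    (hω_int : ∫ x, ω x = 1)
    (ω₀ : ℝ) (hω₀ : ω₀ = ∫ x, (ω x)^2)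
    (u₀ σ₀ σ₁ e0 u₁ : ℝ) (hu₁ : 0 < u₁) (he0 : 0 < e0)
    (c : ℝ) (hc : c = 1/2 - σ₁/u₁^2)
    (h : ℝ → ℝ) (hh : ContDiff ℝ (⊤ : ℕ∞) h)
    (hh1 : ∀ y : ℝ, y ≤ -4 → h y = 1)
    (hhc : ∀ y : ℝ, -3 ≤ y → y ≤ 3 → h y = c)
    (hh0 : ∀ y : ℝ, 4 ≤ y → h y = 0)
    (a : ℝ) (ha : a = u₀ + u₁/2 - σ₁/u₁)
    (e : ℝ → ℝ) (he : ∀ t, e t = (σ₁^2/u₁) * t + e0)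
    (p : ℝ → ℝ) (hp : ∀ t, p t = Real.sqrt (2 * e t / ω₀))
    (u σ : ℝ → ℝ → ℝ → ℝ)
    (hu : ∀ ε x t, u ε x t =
      u₀ + u₁ * h ((x - a*t)/ε) + p t * ((Real.sqrt ε)⁻¹ * ω ((x - a*t - 2*ε)/ε)))
    (hσ : ∀ ε x t, σ ε x t =
      σ₀ + σ₁ * h ((x - a*t)/ε) + e t * (ε⁻¹ * ω ((x - a*t + 2*ε)/ε)))
    (t : ℝ) (ht : 0 ≤ t)
    (ψ : ℝ → ℝ) (hψ : ContDiff ℝ (⊤ : ℕ∞) ψ) (hψc : HasCompactSupport ψ) :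
    Tendsto (fun ε : ℝ =>
        ∫ x, (deriv (fun s => u ε x s) t
              + u ε x t * deriv (fun y => u ε y t) x
              - deriv (fun y => σ ε y t) x) * ψ x)
      (nhdsWithin 0 (Set.Ioi 0)) (nhds 0) := by
  have hu₁' : u₁ ≠ 0 := ne_of_gt hu₁
  -- basic facts about ω
  have hωc : Continuous ω := hω_smooth.continuous
  have hhcont : Continuous h := hh.continuous
  have hωdc : Continuous (deriv ω) := hω_smooth.continuous_deriv (by simp)
  have hhdc : Continuous (deriv h) := hh.continuous_deriv (by simp)
  have hω0 : ∀ z : ℝ, z ≤ -1 ∨ 1 ≤ z → ω z = 0 := by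
    intro z hz; by_contra hne
    rcases hω_supp (Function.mem_support.mpr hne) with ⟨h1, h2⟩
    rcases hz with hz | hz <;> linarith
  have hωd0 : ∀ z : ℝ, z < -1 ∨ 1 < z → deriv ω z = 0 := by
    intro z hz
    have hev : ω =ᶠ[nhds z] (fun _ => (0:ℝ)) := by
      rcases hz with hz | hz
      · filter_upwards [Iio_mem_nhds hz] with w hw
        exact hω0 w (Or.inl (le_of_lt hw))
      · filter_upwards [Ioi_mem_nhds hz] with w hw
        exact hω0 w (Or.inr (le_of_lt hw))
    rw [hev.deriv_eq]; simp
  have hhd0 : ∀ y : ℝ, -3 < y → y < 3 → deriv h y = 0 := by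
    intro y h1 h2
    have hev : h =ᶠ[nhds y] (fun _ => c) := by
      filter_upwards [Ioo_mem_nhds h1 h2] with w hw
      exact hhc w hw.1.le hw.2.le
    rw [hev.deriv_eq]; simp
  have hhd0' : ∀ y : ℝ, y < -4 ∨ 4 < y → deriv h y = 0 := by
    intro y hy
    have hev : h =ᶠ[nhds y] (fun _ => if y < -4 then (1:ℝ) else 0) := by
      rcases hy with hy | hy
      · filter_upwards [Iio_mem_nhds hy] with w hw
        simp only [if_pos hy]; exact hh1 w (le_of_lt hw)
      · filter_upwards [Ioi_mem_nhds hy] with w hw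
        simp only [if_neg (by linarith : ¬ y < -4)]; exact hh0 w (le_of_lt hw)
    rw [hev.deriv_eq]; simp
  -- positivity of ω₀
  have hω2c : Continuous (fun z : ℝ => ω z ^ 2) := hωc.pow 2
  have hω2supp : HasCompactSupport (fun z : ℝ => ω z ^ 2) := by
    apply HasCompactSupport.intro (isCompact_Icc (a := (-1:ℝ)) (b := 1))
    intro z hz
    simp only [Set.mem_Icc, not_and_or, not_le] at hz
    have : ω z = 0 := by
      rcases hz with hz | hz
      exacts [hω0 z (Or.inl hz.le), hω0 z (Or.inr hz.le)]
    simp [this]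
  have hωsupp : HasCompactSupport ω := by
    apply HasCompactSupport.intro (isCompact_Icc (a := (-1:ℝ)) (b := 1))
    intro z hz
    simp only [Set.mem_Icc, not_and_or, not_le] at hz
    rcases hz with hz | hz
    exacts [hω0 z (Or.inl hz.le), hω0 z (Or.inr hz.le)]
  have hω2int : Integrable (fun z : ℝ => ω z ^ 2) :=
    hω2c.integrable_of_hasCompactSupport hω2supp
  have hω₀nonneg : 0 ≤ ω₀ := hω₀ ▸ integral_nonneg fun z => sq_nonneg _
  have hω₀pos : 0 < ω₀ := by
    rcases hω₀nonneg.lt_or_eq with hlt | heq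
    · exact hlt
    · exfalso
      have h2 : (fun z : ℝ => ω z ^ 2) =ᵐ[volume] 0 :=
        (integral_eq_zero_iff_of_nonneg (fun z => sq_nonneg _) hω2int).mp
          (by rw [← hω₀, ← heq])
      have h3 : ω =ᵐ[volume] 0 := by
        filter_upwards [h2] with z hz
        simpa [pow_eq_zero_iff] using hz
      rw [integral_congr_ae h3] at hω_int
      simp at hω_int
  have hω₀' : ω₀ ≠ 0 := ne_of_gt hω₀pos
  -- facts about e, p
  have het : 0 < e t := by
    rw [he]
    have h1 : 0 ≤ σ₁^2/u₁ * t := mul_nonneg (div_nonneg (sq_nonneg _) hu₁.le) ht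
    linarith
  have hpet : 0 < 2 * e t / ω₀ := by positivity
  have hpsq : p t * p t = 2 * e t / ω₀ := by
    rw [hp]; exact Real.mul_self_sqrt hpet.le
  have hpdiff : DifferentiableAt ℝ p t := by
    have hpfun : p = fun s => Real.sqrt ((2*(σ₁^2/u₁)/ω₀) * s + 2*e0/ω₀) := by
      funext s; rw [hp, he]; congr 1; field_simp
    have hinner : HasDerivAt (fun s : ℝ => (2*(σ₁^2/u₁)/ω₀) * s + 2*e0/ω₀)
        (2*(σ₁^2/u₁)/ω₀) t := by
      simpa using ((hasDerivAt_id t).const_mul (2*(σ₁^2/u₁)/ω₀)).add_const (2*e0/ω₀)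
    have harg : (2*(σ₁^2/u₁)/ω₀) * t + 2*e0/ω₀ ≠ 0 := by
      have heq2 : (2*(σ₁^2/u₁)/ω₀)*t + 2*e0/ω₀ = 2*e t/ω₀ := by rw [he]; field_simp
      rw [heq2]; exact ne_of_gt hpet
    rw [hpfun]
    exact ((Real.hasDerivAt_sqrt harg).comp t hinner).differentiableAt
  set pd := deriv p t with hpd_def
  have hpd : HasDerivAt p pd t := hpdiff.hasDerivAt

  -- profile functions
  set f₁ : ℝ → ℝ := fun y => ω (y - 2) with hf₁
  set f₂ : ℝ → ℝ := fun y => deriv h y * (h y - 1/2) with hf₂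
  set q : ℝ → ℝ := fun y => ω (y - 2)^2/ω₀ - ω (y + 2) with hq
  set qd : ℝ → ℝ := fun y => 2/ω₀ * (ω (y - 2) * deriv ω (y - 2)) - deriv ω (y + 2) with hqd
  have hf₁c : Continuous f₁ := by rw [hf₁]; fun_prop
  have hf₂c : Continuous f₂ := by rw [hf₂]; fun_prop
  have hqc : Continuous q := by rw [hq]; fun_prop
  have hqdc : Continuous qd := by rw [hqd]; fun_prop
  have hf₁s : HasCompactSupport f₁ := by
    apply HasCompactSupport.intro (isCompact_Icc (a := (1:ℝ)) (b := 3))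
    intro z hz
    simp only [Set.mem_Icc, not_and_or, not_le] at hz
    rw [hf₁]
    rcases hz with hz | hz
    · exact hω0 _ (Or.inl (by linarith))
    · exact hω0 _ (Or.inr (by linarith))
  have hf₂s : HasCompactSupport f₂ := by
    apply HasCompactSupport.intro (isCompact_Icc (a := (-4:ℝ)) (b := 4))
    intro z hz
    simp only [Set.mem_Icc, not_and_or, not_le] at hz
    rw [hf₂]
    simp only []
    rw [hhd0' z (by tauto), zero_mul]
  have hqs : HasCompactSupport q := by
    apply HasCompactSupport.intro (isCompact_Icc (a := (-3:ℝ)) (b := 3))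
    intro z hz
    simp only [Set.mem_Icc, not_and_or, not_le] at hz
    rw [hq]; simp only []
    rcases hz with hz | hz
    · rw [hω0 (z-2) (Or.inl (by linarith)), hω0 (z+2) (Or.inl (by linarith))]; norm_num
    · rw [hω0 (z-2) (Or.inr (by linarith)), hω0 (z+2) (Or.inr (by linarith))]; norm_num
  have hqds : HasCompactSupport qd := by
    apply HasCompactSupport.intro (isCompact_Icc (a := (-3:ℝ)) (b := 3))
    intro z hz
    simp only [Set.mem_Icc, not_and_or, not_le] at hz
    rw [hqd]; simp only []
    rcases hz with hz | hz
    · rw [hω0 (z-2) (Or.inl (by linarith)), hωd0 (z+2) (Or.inl (by linarith))]; ring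
    · rw [hω0 (z-2) (Or.inr (by linarith)), hωd0 (z+2) (Or.inr (by linarith))]; ring
  -- derivative facts
  have hhder : ∀ y : ℝ, HasDerivAt h (deriv h y) y := fun y =>
    (hh.differentiable (by simp) y).hasDerivAt
  have hωder : ∀ z : ℝ, HasDerivAt ω (deriv ω z) z := fun z =>
    (hω_smooth.differentiable (by simp) z).hasDerivAt
  -- the mean-zero facts
  have hf₂int0 : ∫ y, f₂ y = 0 := by
    have hGd : ∀ y : ℝ, HasDerivAt (fun y => h y^2/2 - h y/2) (f₂ y) y := by
      intro y
      have h1 := (((hhder y).pow 2).div_const 2).sub ((hhder y).div_const 2)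
      exact h1.congr_deriv (by rw [hf₂]; push_cast; ring)
    have hGc1 : ContDiff ℝ 1 (fun y : ℝ => h y^2/2 - h y/2) :=
      (((hh.pow 2).div_const 2).sub (hh.div_const 2)).of_le (by simp)
    have hGs : HasCompactSupport (fun y : ℝ => h y^2/2 - h y/2) := by
      apply HasCompactSupport.intro (isCompact_Icc (a := (-4:ℝ)) (b := 4))
      intro z hz
      simp only [Set.mem_Icc, not_and_or, not_le] at hz
      rcases hz with hz | hz
      · rw [hh1 z hz.le]; norm_num
      · rw [hh0 z hz.le]; norm_num
    have heq3 : f₂ = deriv (fun y : ℝ => h y^2/2 - h y/2) := funext fun y => ((hGd y).deriv).symm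
    rw [heq3]
    exact integral_deriv_zero hGc1 hGs
  have hq1 : ∫ (y:ℝ), ω (y - 2)^2 = ω₀ := by
    have h1 : (fun y : ℝ => ω (y - 2)^2) = fun y : ℝ => (fun z => ω z^2) (y + -2) := by
      funext y; simp [sub_eq_add_neg]
    rw [h1, integral_add_right_eq_self (fun z : ℝ => ω z ^2) (-2), hω₀]
  have hq2 : ∫ (y:ℝ), ω (y + 2) = 1 := by
    have h1 : (fun y : ℝ => ω (y + 2)) = fun y : ℝ => ω (y + 2) := rfl
    rw [show (fun y : ℝ => ω (y + 2)) = fun y : ℝ => ω (y + 2) from rfl,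
      integral_add_right_eq_self ω 2, hω_int]
  have hqint0 : ∫ y, q y = 0 := by
    have int1 : Integrable (fun y : ℝ => ω (y - 2)^2/ω₀) := by
      apply Continuous.integrable_of_hasCompactSupport (by fun_prop)
      apply HasCompactSupport.intro (isCompact_Icc (a := (1:ℝ)) (b := 3))
      intro z hz
      simp only [Set.mem_Icc, not_and_or, not_le] at hz
      rcases hz with hz | hz
      · rw [hω0 (z-2) (Or.inl (by linarith))]; norm_num
      · rw [hω0 (z-2) (Or.inr (by linarith))]; norm_num
    have int2 : Integrable (fun y : ℝ => ω (y + 2)) := by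
      apply Continuous.integrable_of_hasCompactSupport (by fun_prop)
      apply HasCompactSupport.intro (isCompact_Icc (a := (-3:ℝ)) (b := -1))
      intro z hz
      simp only [Set.mem_Icc, not_and_or, not_le] at hz
      rcases hz with hz | hz
      · exact hω0 (z+2) (Or.inl (by linarith))
      · exact hω0 (z+2) (Or.inr (by linarith))
    rw [hq]
    simp only []
    rw [integral_sub int1 int2, integral_div, hq1, hq2]
    field_simp; norm_num
  -- bounds for ψ and its derivative
  obtain ⟨C₁, hC₁⟩ := hψc.exists_bound_of_continuous hψ.continuous
  have hψdc : Continuous (deriv ψ) := hψ.continuous_deriv (by simp)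
  obtain ⟨C₂, hC₂⟩ := hψc.deriv.exists_bound_of_continuous hψdc
  -- the three convergence statements
  have hT1 : Tendsto (fun ε : ℝ => ∫ y, f₁ y * ψ (ε * y + a*t)) (nhdsWithin 0 (Set.Ioi 0))
      (nhds (∫ y, f₁ y * ψ (a*t))) := tendsto_int_aux hf₁c hf₁s hψ.continuous C₁ hC₁ (a*t)
  have hT2 : Tendsto (fun ε : ℝ => ∫ y, f₂ y * ψ (ε * y + a*t)) (nhdsWithin 0 (Set.Ioi 0))
      (nhds 0) := by
    have := tendsto_int_aux hf₂c hf₂s hψ.continuous C₁ hC₁ (a*t)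
    rwa [show (∫ y, f₂ y * ψ (a*t)) = 0 by rw [integral_mul_const, hf₂int0, zero_mul]] at this
  have hT3 : Tendsto (fun ε : ℝ => ∫ y, q y * deriv ψ (ε * y + a*t)) (nhdsWithin 0 (Set.Ioi 0))
      (nhds 0) := by
    have := tendsto_int_aux hqc hqs hψdc C₂ hC₂ (a*t)
    rwa [show (∫ y, q y * deriv ψ (a*t)) = 0 by rw [integral_mul_const, hqint0, zero_mul]] at this
  have hsqrt0 : Tendsto (fun ε : ℝ => Real.sqrt ε) (nhdsWithin 0 (Set.Ioi 0)) (nhds 0) := by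
    have h1 := Real.continuous_sqrt.tendsto 0
    rw [Real.sqrt_zero] at h1
    exact h1.mono_left nhdsWithin_le_nhds
  have hmain : Tendsto (fun ε : ℝ => pd * Real.sqrt ε * (∫ y, f₁ y * ψ (ε * y + a*t))
      + u₁^2 * (∫ y, f₂ y * ψ (ε * y + a*t))
      - e t * (∫ y, q y * deriv ψ (ε * y + a*t))) (nhdsWithin 0 (Set.Ioi 0)) (nhds 0) := by
    have h1 := ((tendsto_const_nhds (x := pd) (f := nhdsWithin (0:ℝ) (Set.Ioi 0))).mul hsqrt0).mul hT1
    have h2 := (tendsto_const_nhds (x := u₁^2) (f := nhdsWithin (0:ℝ) (Set.Ioi 0))).mul hT2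
    have h3 := (tendsto_const_nhds (x := e t) (f := nhdsWithin (0:ℝ) (Set.Ioi 0))).mul hT3
    have h4 := (h1.add h2).sub h3
    simpa using h4

  have hψcont : Continuous ψ := hψ.continuous
  refine Tendsto.congr' ?_ hmain
  filter_upwards [self_mem_nhdsWithin] with ε hε
  have hε' : (0:ℝ) < ε := hε
  have hεne : ε ≠ 0 := ne_of_gt hε'
  have hsε : Real.sqrt ε ≠ 0 := ne_of_gt (Real.sqrt_pos.mpr hε')
  have hss : Real.sqrt ε * Real.sqrt ε = ε := Real.mul_self_sqrt hε'.le
  -- pointwise identity for the integrand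
  have key : ∀ x : ℝ,
      (deriv (fun s => u ε x s) t + u ε x t * deriv (fun y => u ε y t) x
        - deriv (fun y => σ ε y t) x) * ψ x
      = (fun y => (pd * ((Real.sqrt ε)⁻¹ * ω (y - 2))
          + ε⁻¹ * (u₁^2 * (deriv h y * (h y - 1/2)))
          + ε⁻¹ * ε⁻¹ * (e t * (2/ω₀ * (ω (y - 2) * deriv ω (y - 2)) - deriv ω (y + 2))))
          * ψ (ε * y + a*t)) ((x - a*t)/ε) := by
    intro x
    simp only []
    have hYx : ε * ((x - a*t)/ε) + a*t = x := by field_simp; ring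
    have hY2m : (x - a*t - 2*ε)/ε = (x - a*t)/ε - 2 := by
      rw [sub_div, mul_div_assoc, div_self hεne, mul_one]
    have hY2p : (x - a*t + 2*ε)/ε = (x - a*t)/ε + 2 := by
      rw [add_div, mul_div_assoc, div_self hεne, mul_one]
    -- inner affine derivatives
    have hiu : HasDerivAt (fun s : ℝ => (x - a*s)/ε) (-a/ε) t := by
      have h1 := (((hasDerivAt_id t).const_mul a).const_sub x).div_const ε
      exact h1.congr_deriv (by ring)
    have hiw : HasDerivAt (fun s : ℝ => (x - a*s - 2*ε)/ε) (-a/ε) t := by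
      have h1 := ((((hasDerivAt_id t).const_mul a).const_sub x).sub_const (2*ε)).div_const ε
      exact h1.congr_deriv (by ring)
    have hix : HasDerivAt (fun y : ℝ => (y - a*t)/ε) (1/ε) x := by
      simpa using ((hasDerivAt_id x).sub_const (a*t)).div_const ε
    have hixm : HasDerivAt (fun y : ℝ => (y - a*t - 2*ε)/ε) (1/ε) x := by
      simpa using (((hasDerivAt_id x).sub_const (a*t)).sub_const (2*ε)).div_const ε
    have hixp : HasDerivAt (fun y : ℝ => (y - a*t + 2*ε)/ε) (1/ε) x := by
      simpa using (((hasDerivAt_id x).sub_const (a*t)).add_const (2*ε)).div_const ε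
    -- outer derivatives at the relevant points
    have hwm : HasDerivAt ω (deriv ω ((x - a*t)/ε - 2)) ((x - a*t - 2*ε)/ε) := by
      rw [hY2m]; exact hωder _
    have hwp : HasDerivAt ω (deriv ω ((x - a*t)/ε + 2)) ((x - a*t + 2*ε)/ε) := by
      rw [hY2p]; exact hωder _
    -- composed derivatives
    have hht : HasDerivAt (fun s : ℝ => h ((x - a*s)/ε)) (deriv h ((x - a*t)/ε) * (-a/ε)) t := by
      simpa [Function.comp_def] using (hhder ((x - a*t)/ε)).comp t hiu
    have hwt : HasDerivAt (fun s : ℝ => ω ((x - a*s - 2*ε)/ε))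
        (deriv ω ((x - a*t)/ε - 2) * (-a/ε)) t := by
      simpa [Function.comp_def] using hwm.comp t hiw
    have hhx : HasDerivAt (fun y : ℝ => h ((y - a*t)/ε)) (deriv h ((x - a*t)/ε) * (1/ε)) x := by
      simpa [Function.comp_def] using (hhder ((x - a*t)/ε)).comp x hix
    have hwx : HasDerivAt (fun y : ℝ => ω ((y - a*t - 2*ε)/ε))
        (deriv ω ((x - a*t)/ε - 2) * (1/ε)) x := by
      simpa [Function.comp_def] using hwm.comp x hixm
    have hwxp : HasDerivAt (fun y : ℝ => ω ((y - a*t + 2*ε)/ε))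
        (deriv ω ((x - a*t)/ε + 2) * (1/ε)) x := by
      simpa [Function.comp_def] using hwp.comp x hixp
    -- the three derivative computations
    have hDt : deriv (fun s => u ε x s) t
        = u₁ * (deriv h ((x - a*t)/ε) * (-a/ε))
          + (pd * ((Real.sqrt ε)⁻¹ * ω ((x - a*t - 2*ε)/ε))
            + p t * ((Real.sqrt ε)⁻¹ * (deriv ω ((x - a*t)/ε - 2) * (-a/ε)))) := by
      have hfun : (fun s : ℝ => u ε x s) = fun s : ℝ =>
          u₀ + u₁ * h ((x - a*s)/ε) + p s * ((Real.sqrt ε)⁻¹ * ω ((x - a*s - 2*ε)/ε)) :=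
        funext fun s => hu ε x s
      rw [hfun]
      exact HasDerivAt.deriv
        (((hht.const_mul u₁).const_add u₀).add (hpd.mul (hwt.const_mul (Real.sqrt ε)⁻¹)))
    have hDxu : deriv (fun y => u ε y t) x
        = u₁ * (deriv h ((x - a*t)/ε) * (1/ε))
          + p t * ((Real.sqrt ε)⁻¹ * (deriv ω ((x - a*t)/ε - 2) * (1/ε))) := by
      have hfun : (fun y : ℝ => u ε y t) = fun y : ℝ =>
          u₀ + u₁ * h ((y - a*t)/ε) + p t * ((Real.sqrt ε)⁻¹ * ω ((y - a*t - 2*ε)/ε)) :=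
        funext fun y => hu ε y t
      rw [hfun]
      exact HasDerivAt.deriv
        (((hhx.const_mul u₁).const_add u₀).add ((hwx.const_mul (Real.sqrt ε)⁻¹).const_mul (p t)))
    have hDxσ : deriv (fun y => σ ε y t) x
        = σ₁ * (deriv h ((x - a*t)/ε) * (1/ε))
          + e t * (ε⁻¹ * (deriv ω ((x - a*t)/ε + 2) * (1/ε))) := by
      have hfun : (fun y : ℝ => σ ε y t) = fun y : ℝ =>
          σ₀ + σ₁ * h ((y - a*t)/ε) + e t * (ε⁻¹ * ω ((y - a*t + 2*ε)/ε)) :=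
        funext fun y => hσ ε y t
      rw [hfun]
      exact HasDerivAt.deriv
        (((hhx.const_mul σ₁).const_add σ₀).add ((hwxp.const_mul ε⁻¹).const_mul (e t)))
    -- support cancellation facts
    have F1 : deriv h ((x - a*t)/ε) * ω ((x - a*t)/ε - 2) = 0 := by
      rcases eq_or_ne (ω ((x - a*t)/ε - 2)) 0 with h0 | h0
      · rw [h0, mul_zero]
      · rcases hω_supp (Function.mem_support.mpr h0) with ⟨hl, hr⟩
        rw [hhd0 _ (by linarith) (by linarith), zero_mul]
    have F2 : (u₀ - a + u₁ * h ((x - a*t)/ε)) * deriv ω ((x - a*t)/ε - 2) = 0 := by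
      rcases lt_or_ge (3:ℝ) ((x - a*t)/ε) with h3 | h3
      · rw [hωd0 _ (Or.inr (by linarith)), mul_zero]
      · rcases lt_or_ge ((x - a*t)/ε) (-3) with h4 | h4
        · rw [hωd0 _ (Or.inl (by linarith)), mul_zero]
        · have h5 : u₀ - a + u₁ * c = 0 := by
            rw [ha, hc]; field_simp; ring
          rw [hhc _ h4 h3, h5, zero_mul]
    have hF3 : (Real.sqrt ε)⁻¹ * (Real.sqrt ε)⁻¹ = ε⁻¹ := by
      rw [← mul_inv, hss]
    have hF5 : u₁ * (u₀ - a) = σ₁ - u₁^2/2 := by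
      rw [ha]; field_simp; ring
    rw [hDt, hDxu, hDxσ, hu ε x t, hYx, hY2m]
    linear_combination (p t * (Real.sqrt ε)⁻¹ * u₁ * ψ x / ε) * F1
      + (p t * (Real.sqrt ε)⁻¹ * ψ x / ε) * F2
      + (p t * p t * ω ((x - a*t)/ε - 2) * deriv ω ((x - a*t)/ε - 2) * ψ x / ε) * hF3
      + (ω ((x - a*t)/ε - 2) * deriv ω ((x - a*t)/ε - 2) * ψ x / (ε*ε)) * hpsq
      + (deriv h ((x - a*t)/ε) * ψ x / ε) * hF5
  -- change of variables
  have step1 : ∫ x, (deriv (fun s => u ε x s) t + u ε x t * deriv (fun y => u ε y t) x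
        - deriv (fun y => σ ε y t) x) * ψ x
      = ε * ∫ y, (pd * ((Real.sqrt ε)⁻¹ * ω (y - 2))
          + ε⁻¹ * (u₁^2 * (deriv h y * (h y - 1/2)))
          + ε⁻¹ * ε⁻¹ * (e t * (2/ω₀ * (ω (y - 2) * deriv ω (y - 2)) - deriv ω (y + 2))))
          * ψ (ε * y + a*t) := by
    rw [show (fun x => (deriv (fun s => u ε x s) t + u ε x t * deriv (fun y => u ε y t) x
        - deriv (fun y => σ ε y t) x) * ψ x) = fun x =>
        (fun y => (pd * ((Real.sqrt ε)⁻¹ * ω (y - 2))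
          + ε⁻¹ * (u₁^2 * (deriv h y * (h y - 1/2)))
          + ε⁻¹ * ε⁻¹ * (e t * (2/ω₀ * (ω (y - 2) * deriv ω (y - 2)) - deriv ω (y + 2))))
          * ψ (ε * y + a*t)) ((x - a*t)/ε) from funext key]
    exact cov (k := fun y => (pd * ((Real.sqrt ε)⁻¹ * ω (y - 2))
          + ε⁻¹ * (u₁^2 * (deriv h y * (h y - 1/2)))
          + ε⁻¹ * ε⁻¹ * (e t * (2/ω₀ * (ω (y - 2) * deriv ω (y - 2)) - deriv ω (y + 2))))
          * ψ (ε * y + a*t)) (a*t) hε'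
  -- splitting the rescaled integral
  have i1 : Integrable (fun y => (pd * (Real.sqrt ε)⁻¹) * (f₁ y * ψ (ε * y + a*t))) :=
    (int_ccs hf₁c hf₁s (by fun_prop)).const_mul _
  have i2 : Integrable (fun y => (ε⁻¹ * u₁^2) * (f₂ y * ψ (ε * y + a*t))) :=
    (int_ccs hf₂c hf₂s (by fun_prop)).const_mul _
  have i3 : Integrable (fun y => (ε⁻¹ * ε⁻¹ * e t) * (qd y * ψ (ε * y + a*t))) :=
    (int_ccs hqdc hqds (by fun_prop)).const_mul _
  have i23 : Integrable (fun y => (ε⁻¹ * u₁^2) * (f₂ y * ψ (ε * y + a*t))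
      + (ε⁻¹ * ε⁻¹ * e t) * (qd y * ψ (ε * y + a*t))) := i2.add i3
  have step2 : (∫ y, (pd * ((Real.sqrt ε)⁻¹ * ω (y - 2))
          + ε⁻¹ * (u₁^2 * (deriv h y * (h y - 1/2)))
          + ε⁻¹ * ε⁻¹ * (e t * (2/ω₀ * (ω (y - 2) * deriv ω (y - 2)) - deriv ω (y + 2))))
          * ψ (ε * y + a*t))
      = (pd * (Real.sqrt ε)⁻¹) * (∫ y, f₁ y * ψ (ε * y + a*t))
        + ((ε⁻¹ * u₁^2) * (∫ y, f₂ y * ψ (ε * y + a*t))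
          + (ε⁻¹ * ε⁻¹ * e t) * (∫ y, qd y * ψ (ε * y + a*t))) := by
    rw [show (fun y => (pd * ((Real.sqrt ε)⁻¹ * ω (y - 2))
          + ε⁻¹ * (u₁^2 * (deriv h y * (h y - 1/2)))
          + ε⁻¹ * ε⁻¹ * (e t * (2/ω₀ * (ω (y - 2) * deriv ω (y - 2)) - deriv ω (y + 2))))
          * ψ (ε * y + a*t))
        = fun y => (pd * (Real.sqrt ε)⁻¹) * (f₁ y * ψ (ε * y + a*t))
          + ((ε⁻¹ * u₁^2) * (f₂ y * ψ (ε * y + a*t))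
            + (ε⁻¹ * ε⁻¹ * e t) * (qd y * ψ (ε * y + a*t))) from funext fun y => by
      simp only [hf₁, hf₂, hqd]; ring]
    rw [integral_add i1 i23, integral_add i2 i3,
      integral_const_mul, integral_const_mul, integral_const_mul]
  -- integration by parts for the qd-term
  have step3 : (∫ y, qd y * ψ (ε * y + a*t))
      = -(ε * ∫ y, q y * deriv ψ (ε * y + a*t)) := by
    have hψder : ∀ z : ℝ, HasDerivAt ψ (deriv ψ z) z := fun z =>
      (hψ.differentiable (by simp) z).hasDerivAt
    have haff : ∀ y : ℝ, HasDerivAt (fun y : ℝ => ψ (ε * y + a*t))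
        (deriv ψ (ε * y + a*t) * ε) y := by
      intro y
      have hin : HasDerivAt (fun y : ℝ => ε * y + a*t) ε y := by
        simpa using ((hasDerivAt_id y).const_mul ε).add_const (a*t)
      simpa [Function.comp_def] using (hψder (ε * y + a*t)).comp y hin
    have hqd' : ∀ y : ℝ, HasDerivAt q (qd y) y := by
      intro y
      have h1 : HasDerivAt (fun y : ℝ => ω (y - 2)) (deriv ω (y - 2)) y := by
        simpa [Function.comp_def] using (hωder (y - 2)).comp y ((hasDerivAt_id y).sub_const 2)
      have h2 : HasDerivAt (fun y : ℝ => ω (y + 2)) (deriv ω (y + 2)) y := by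
        simpa [Function.comp_def] using (hωder (y + 2)).comp y ((hasDerivAt_id y).add_const 2)
      rw [hq, hqd]
      have h3 := ((h1.pow 2).div_const ω₀).sub h2
      exact h3.congr_deriv (by push_cast; ring)
    have hprod : ∀ y : ℝ, HasDerivAt (fun y => q y * ψ (ε * y + a*t))
        (qd y * ψ (ε * y + a*t) + q y * (deriv ψ (ε * y + a*t) * ε)) y := fun y =>
      (hqd' y).mul (haff y)
    have hqCD : ContDiff ℝ 1 q := by
      rw [hq]
      exact ((((hω_smooth.comp (contDiff_id.sub contDiff_const)).pow 2).div_const ω₀).sub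
        (hω_smooth.comp (contDiff_id.add contDiff_const))).of_le (by simp)
    have hψaffCD : ContDiff ℝ 1 (fun y : ℝ => ψ (ε * y + a*t)) :=
      (hψ.comp ((contDiff_const.mul contDiff_id).add contDiff_const)).of_le (by simp)
    have hzero : ∫ y, (qd y * ψ (ε * y + a*t) + q y * (deriv ψ (ε * y + a*t) * ε)) = 0 := by
      rw [show (fun y => qd y * ψ (ε * y + a*t) + q y * (deriv ψ (ε * y + a*t) * ε))
          = deriv (fun y => q y * ψ (ε * y + a*t)) from funext fun y => ((hprod y).deriv).symm]
      exact integral_deriv_zero (hqCD.mul hψaffCD) (hqs.mul_right)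
    have i4 : Integrable (fun y => qd y * ψ (ε * y + a*t)) :=
      int_ccs hqdc hqds (by fun_prop)
    have i5 : Integrable (fun y => q y * (deriv ψ (ε * y + a*t) * ε)) :=
      int_ccs hqc hqs (g := fun y => deriv ψ (ε * y + a*t) * ε) (by fun_prop)
    have hsplit := integral_add i4 i5
    rw [hzero] at hsplit
    have e5 : ∫ y, q y * (deriv ψ (ε * y + a*t) * ε)
        = (∫ y, q y * deriv ψ (ε * y + a*t)) * ε := by
      simp_rw [← mul_assoc]
      exact integral_mul_const ε _
    rw [e5] at hsplit
    linear_combination -hsplit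
  -- put everything together
  show pd * Real.sqrt ε * (∫ y, f₁ y * ψ (ε * y + a*t))
      + u₁^2 * (∫ y, f₂ y * ψ (ε * y + a*t))
      - e t * (∫ y, q y * deriv ψ (ε * y + a*t)) = _
  rw [step1, step2, step3]
  set J₁ := ∫ y, f₁ y * ψ (ε * y + a*t) with hJ₁
  set J₂ := ∫ y, f₂ y * ψ (ε * y + a*t) with hJ₂
  set K := ∫ y, q y * deriv ψ (ε * y + a*t) with hK
  have hinv : ε * (Real.sqrt ε)⁻¹ = Real.sqrt ε := by
    rw [show ε * (Real.sqrt ε)⁻¹ = Real.sqrt ε * (Real.sqrt ε * (Real.sqrt ε)⁻¹) from by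
      rw [← mul_assoc, hss], mul_inv_cancel₀ hsε, mul_one]
  have hinv2 : ε * ε⁻¹ = 1 := mul_inv_cancel₀ hεne
  linear_combination (-(pd*J₁)) * hinv + (-(u₁^2*J₂) + e t * K * (ε*ε⁻¹+1)) * hinv2
end

section
/- (Theorem 4.5, second equation) For every t ≥ 0 and every smooth compactly supported test function ψ : ℝ → ℝ, ∫_ℝ (∂ₜσ_ε + u_ε ∂ₓσ_ε)(x, t) ψ(x) dx → 0 as ε → 0⁺; that is, the smooth ansatz (u_ε, σ_ε) satisfies the second equation of the nonstrictly hyperbolic system ∂ₜσ + u ∂ₓσ = 0 in the weak asymptotic sense. -/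
open MeasureTheory Filter Set

/-- Theorem 4.5, second equation: the smooth ansatz `(u_ε, σ_ε)` satisfies
`∂ₜσ + u ∂ₓσ = 0` (second equation of the nonstrictly hyperbolic system) in the
weak asymptotic sense. -/
theorem weak_asymptotic_nonstrict_second_eq
    (ω : ℝ → ℝ) (hω_smooth : ContDiff ℝ (⊤ : ℕ∞) ω) (hω_even : ∀ x, ω (-x) = ω x)
    (hω_nonneg : ∀ x, 0 ≤ ω x) (hω_supp : Function.support ω ⊆ Set.Ioo (-1) 1)
    (hω_int : ∫ x, ω x = 1)
    (ω₀ : ℝ) (hω₀ : ω₀ = ∫ x, (ω x)^2)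
    (u₀ σ₀ σ₁ e0 u₁ : ℝ) (hu₁ : 0 < u₁) (he0 : 0 < e0)
    (c : ℝ) (hc : c = 1/2 - σ₁/u₁^2)
    (h : ℝ → ℝ) (hh : ContDiff ℝ (⊤ : ℕ∞) h)
    (hh1 : ∀ y : ℝ, y ≤ -4 → h y = 1)
    (hhc : ∀ y : ℝ, -3 ≤ y → y ≤ 3 → h y = c)
    (hh0 : ∀ y : ℝ, 4 ≤ y → h y = 0)
    (a : ℝ) (ha : a = u₀ + u₁/2 - σ₁/u₁)
    (e : ℝ → ℝ) (he : ∀ t, e t = (σ₁^2/u₁) * t + e0)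
    (p : ℝ → ℝ) (hp : ∀ t, p t = Real.sqrt (2 * e t / ω₀))
    (u σ : ℝ → ℝ → ℝ → ℝ)
    (hu : ∀ ε x t, u ε x t =
      u₀ + u₁ * h ((x - a*t)/ε) + p t * ((Real.sqrt ε)⁻¹ * ω ((x - a*t - 2*ε)/ε)))
    (hσ : ∀ ε x t, σ ε x t =
      σ₀ + σ₁ * h ((x - a*t)/ε) + e t * (ε⁻¹ * ω ((x - a*t + 2*ε)/ε)))
    (t : ℝ) (ht : 0 ≤ t)
    (ψ : ℝ → ℝ) (hψ : ContDiff ℝ (⊤ : ℕ∞) ψ) (hψc : HasCompactSupport ψ) :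
    Tendsto (fun ε : ℝ =>
        ∫ x, (deriv (fun s => σ ε x s) t
              + u ε x t * deriv (fun y => σ ε y t) x) * ψ x)
      (nhdsWithin 0 (Set.Ioi 0)) (nhds 0) := by
  have hu₁' : u₁ ≠ 0 := hu₁.ne'
  set e' : ℝ := σ₁^2/u₁ with he'
  set F : ℝ → ℝ := fun y => e' * ω (y+2) + σ₁ * ((u₀ - a + u₁ * h y) * deriv h y)
    with hF
  -- basic vanishing facts
  have hωz : ∀ y : ℝ, y ∉ Set.Ioo (-1:ℝ) 1 → ω y = 0 := by
    intro y hy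
    by_contra hne
    exact hy (hω_supp hne)
  have hωdiff : Differentiable ℝ ω := hω_smooth.differentiable (by simp)
  have hhdiff : Differentiable ℝ h := hh.differentiable (by simp)
  have hω'z : ∀ y : ℝ, ω y = 0 → deriv ω y = 0 := by
    intro y hy
    have hmin : IsLocalMin ω y :=
      Filter.Eventually.of_forall (fun z => by rw [hy]; exact hω_nonneg z)
    exact hmin.deriv_eq_zero
  have hω'z' : ∀ y : ℝ, y ∉ Set.Ioo (-1:ℝ) 1 → deriv ω y = 0 :=
    fun y hy => hω'z y (hωz y hy)
  have hh'zc : ∀ y : ℝ, -3 < y → y < 3 → deriv h y = 0 := by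
    intro y hy1 hy2
    have heq : h =ᶠ[nhds y] fun _ => c := by
      filter_upwards [Ioo_mem_nhds hy1 hy2] with z hz
      exact hhc z hz.1.le hz.2.le
    rw [heq.deriv_eq]
    exact deriv_const y c
  have hh'z4 : ∀ y : ℝ, 4 < |y| → deriv h y = 0 := by
    intro y hy
    rcases abs_lt.not.mp (not_lt.mpr hy.le) |> fun _ => lt_abs.mp hy with hy' | hy'
    · have heq : h =ᶠ[nhds y] fun _ => (0:ℝ) := by
        filter_upwards [Ioi_mem_nhds hy'] with z hz
        exact hh0 z (le_of_lt hz)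
      rw [heq.deriv_eq]; exact deriv_const y 0
    · have hy'' : y < -4 := by linarith
      have heq : h =ᶠ[nhds y] fun _ => (1:ℝ) := by
        filter_upwards [Iio_mem_nhds hy''] with z hz
        exact hh1 z (le_of_lt hz)
      rw [heq.deriv_eq]; exact deriv_const y 1
  -- Step 1: for every ε > 0 the integral equals ∫ y, F y * ψ (a*t + ε*y)
  have key : ∀ ε : ℝ, 0 < ε →
      (∫ x, (deriv (fun s => σ ε x s) t
              + u ε x t * deriv (fun y => σ ε y t) x) * ψ x)
        = ∫ y, F y * ψ (a*t + ε*y) := by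
    intro ε hε
    have hεne : ε ≠ 0 := hε.ne'
    have hfun : ∀ x : ℝ,
        (deriv (fun s => σ ε x s) t + u ε x t * deriv (fun y => σ ε y t) x) * ψ x
        = (ε⁻¹ * F ((x - a*t)/ε)) * ψ x := by
      intro x
      set ξ := (x - a*t)/ε with hξ
      have hξ2 : (x - a*t + 2*ε)/ε = ξ + 2 := by
        rw [hξ]; field_simp
      -- time derivative
      have hd1 : HasDerivAt (fun s : ℝ => (x - a*s)/ε) (-a/ε) t := by
        have h0 : HasDerivAt (fun s : ℝ => x - a*s) (-a) t := by
          simpa using ((hasDerivAt_id t).const_mul a).const_sub x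
        simpa using h0.div_const ε
      have hd2 : HasDerivAt (fun s : ℝ => (x - a*s + 2*ε)/ε) (-a/ε) t := by
        have h0 : HasDerivAt (fun s : ℝ => x - a*s + 2*ε) (-a) t := by
          simpa using (((hasDerivAt_id t).const_mul a).const_sub x).add_const (2*ε)
        simpa using h0.div_const ε
      have hhd : HasDerivAt (fun s : ℝ => h ((x - a*s)/ε)) (deriv h ξ * (-a/ε)) t :=
        (hhdiff ξ).hasDerivAt.comp t hd1
      have hωd : HasDerivAt (fun s : ℝ => ω ((x - a*s + 2*ε)/ε))
          (deriv ω (ξ+2) * (-a/ε)) t := by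
        have h0 := (hωdiff ((x - a*t + 2*ε)/ε)).hasDerivAt.comp t hd2
        rwa [hξ2] at h0
      have hed : HasDerivAt e e' t := by
        have h0 : HasDerivAt (fun s : ℝ => (σ₁^2/u₁) * s + e0) (σ₁^2/u₁) t := by
          simpa using ((hasDerivAt_id t).const_mul (σ₁^2/u₁)).add_const e0
        have hfe : e = fun s => (σ₁^2/u₁) * s + e0 := funext he
        rw [hfe]; exact h0
      have hσt : HasDerivAt (fun s => σ ε x s)
          (σ₁ * (deriv h ξ * (-a/ε))
            + (e' * (ε⁻¹ * ω (ξ+2)) + e t * (ε⁻¹ * (deriv ω (ξ+2) * (-a/ε))))) t := by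
        have hfe : (fun s => σ ε x s)
            = fun s => σ₀ + σ₁ * h ((x - a*s)/ε) + e s * (ε⁻¹ * ω ((x - a*s + 2*ε)/ε)) :=
          funext (hσ ε x)
        rw [hfe]
        have h0 := ((hhd.const_mul σ₁).const_add σ₀).add (hed.mul (hωd.const_mul ε⁻¹))
        rw [hξ2] at h0; exact h0
      -- space derivative
      have hd3 : HasDerivAt (fun y : ℝ => (y - a*t)/ε) (1/ε) x := by
        simpa using ((hasDerivAt_id x).sub_const (a*t)).div_const ε
      have hd4 : HasDerivAt (fun y : ℝ => (y - a*t + 2*ε)/ε) (1/ε) x := by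
        simpa using (((hasDerivAt_id x).sub_const (a*t)).add_const (2*ε)).div_const ε
      have hhdx : HasDerivAt (fun y : ℝ => h ((y - a*t)/ε)) (deriv h ξ * (1/ε)) x :=
        (hhdiff ξ).hasDerivAt.comp x hd3
      have hωdx : HasDerivAt (fun y : ℝ => ω ((y - a*t + 2*ε)/ε))
          (deriv ω (ξ+2) * (1/ε)) x := by
        have h0 := (hωdiff ((x - a*t + 2*ε)/ε)).hasDerivAt.comp x hd4
        rwa [hξ2] at h0
      have hσx : HasDerivAt (fun y => σ ε y t)
          (σ₁ * (deriv h ξ * (1/ε)) + e t * (ε⁻¹ * (deriv ω (ξ+2) * (1/ε)))) x := by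
        have hfe : (fun y => σ ε y t)
            = fun y => σ₀ + σ₁ * h ((y - a*t)/ε) + e t * (ε⁻¹ * ω ((y - a*t + 2*ε)/ε)) :=
          funext (fun y => hσ ε y t)
        rw [hfe]
        exact ((hhdx.const_mul σ₁).const_add σ₀).add ((hωdx.const_mul ε⁻¹).const_mul (e t))
      have hux : u ε x t = u₀ + u₁ * h ξ + p t * ((Real.sqrt ε)⁻¹ * ω (ξ - 2)) := by
        rw [hu]
        have : (x - a*t - 2*ε)/ε = ξ - 2 := by rw [hξ]; field_simp
        rw [this]
      -- vanishing products
      have K1 : ω (ξ-2) * deriv h ξ = 0 := by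
        rcases eq_or_ne (ω (ξ-2)) 0 with h0 | h0
        · rw [h0, zero_mul]
        · have hmem := hω_supp h0
          have h1 : -1 < ξ - 2 := hmem.1
          have h2 : ξ - 2 < 1 := hmem.2
          rw [hh'zc ξ (by linarith) (by linarith), mul_zero]
      have K2 : ω (ξ-2) * deriv ω (ξ+2) = 0 := by
        rcases eq_or_ne (ω (ξ-2)) 0 with h0 | h0
        · rw [h0, zero_mul]
        · have hmem := hω_supp h0
          have h2 : ξ - 2 < 1 := hmem.2
          have : deriv ω (ξ+2) = 0 := by
            apply hω'z'
            intro hmem2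
            have := hmem2.2
            have h1 : -1 < ξ - 2 := hmem.1
            linarith
          rw [this, mul_zero]
      have K3 : (u₀ - a + u₁ * h ξ) * deriv ω (ξ+2) = 0 := by
        rcases eq_or_ne (deriv ω (ξ+2)) 0 with h0 | h0
        · rw [h0, mul_zero]
        · have hne : ω (ξ+2) ≠ 0 := fun hz => h0 (hω'z _ hz)
          have hmem := hω_supp hne
          have h1 : -1 < ξ + 2 := hmem.1
          have h2 : ξ + 2 < 1 := hmem.2
          have hhc' : h ξ = c := hhc ξ (by linarith) (by linarith)
          have : u₀ - a + u₁ * h ξ = 0 := by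
            rw [hhc', ha, hc]; field_simp; ring
          rw [this, zero_mul]
      rw [hσt.deriv, hσx.deriv, hux, hF]
      simp only
      linear_combination (ψ x * (e t * (ε⁻¹ * (1/ε)))) * K3
        + (ψ x * (p t * (Real.sqrt ε)⁻¹ * σ₁ * (1/ε))) * K1
        + (ψ x * (p t * (Real.sqrt ε)⁻¹ * e t * (ε⁻¹ * (1/ε)))) * K2
    calc (∫ x, (deriv (fun s => σ ε x s) t
              + u ε x t * deriv (fun y => σ ε y t) x) * ψ x)
        = ∫ x, (fun z : ℝ => ε⁻¹ * (F (z/ε) * ψ (a*t + ε * (z/ε)))) (x - a*t) := by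
          congr 1
          funext x
          rw [hfun x]
          simp only
          rw [show a*t + ε*((x - a*t)/ε) = x by field_simp; ring]
          ring
      _ = ∫ z, ε⁻¹ * (F (z/ε) * ψ (a*t + ε * (z/ε))) :=
          integral_sub_right_eq_self (fun z : ℝ => ε⁻¹ * (F (z/ε) * ψ (a*t + ε * (z/ε)))) (a*t)
      _ = |ε| • ∫ y, ε⁻¹ * (F y * ψ (a*t + ε * y)) :=
          Measure.integral_comp_div (fun y : ℝ => ε⁻¹ * (F y * ψ (a*t + ε * y))) ε
      _ = ∫ y, F y * ψ (a*t + ε*y) := by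
          rw [integral_const_mul, abs_of_pos hε, smul_eq_mul, ← mul_assoc,
            mul_inv_cancel₀ hεne, one_mul]
  -- Step 2: continuity and support facts for F
  have hderivh_cont : Continuous (deriv h) := hh.continuous_deriv (by simp)
  have hFcont : Continuous F := by
    apply Continuous.add
    · exact continuous_const.mul (hω_smooth.continuous.comp (continuous_id.add continuous_const))
    · exact continuous_const.mul
        (((continuous_const.add (continuous_const.mul hh.continuous)).mul hderivh_cont))
  have hFsupp : HasCompactSupport F := by
    apply HasCompactSupport.intro (isCompact_Icc : IsCompact (Icc (-4:ℝ) 4))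
    intro y hy
    simp only [mem_Icc, not_and_or, not_le] at hy
    have h4 : 4 < |y| := by
      rcases hy with hy | hy
      · exact lt_abs.mpr (Or.inr (by linarith))
      · exact lt_abs.mpr (Or.inl hy)
    have hω0 : ω (y+2) = 0 := by
      apply hωz
      intro hmem
      rcases hy with hy | hy
      · have := hmem.1; linarith
      · have := hmem.2; linarith
    rw [hF]
    simp only
    rw [hω0, hh'z4 y h4, mul_zero, mul_zero, mul_zero, add_zero]
  -- Step 3: dominated convergence
  obtain ⟨C, hC⟩ := hψc.exists_bound_of_continuous hψ.continuous
  have hbound_int : Integrable (fun y => ‖F y‖ * C) := by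
    exact (hFcont.norm.integrable_of_hasCompactSupport hFsupp.norm).mul_const C
  have hmain : Tendsto (fun ε : ℝ => ∫ y, F y * ψ (a*t + ε*y))
      (nhdsWithin 0 (Set.Ioi 0)) (nhds (∫ y, F y * ψ (a*t))) := by
    apply tendsto_integral_filter_of_dominated_convergence (fun y => ‖F y‖ * C)
    · apply Filter.Eventually.of_forall
      intro ε
      exact (hFcont.mul (hψ.continuous.comp
        (continuous_const.add (continuous_const.mul continuous_id)))).aestronglyMeasurable
    · apply Filter.Eventually.of_forall
      intro ε
      apply Filter.Eventually.of_forall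
      intro y
      rw [norm_mul]
      exact mul_le_mul_of_nonneg_left (hC _) (norm_nonneg _)
    · exact hbound_int
    · apply Filter.Eventually.of_forall
      intro y
      have hcont : Tendsto (fun ε : ℝ => ψ (a*t + ε*y)) (nhds 0) (nhds (ψ (a*t))) := by
        have h0 : Tendsto (fun ε : ℝ => a*t + ε*y) (nhds 0) (nhds (a*t + 0*y)) := by
          exact (tendsto_const_nhds.add ((continuous_id.mul continuous_const).tendsto 0))
        rw [zero_mul, add_zero] at h0
        exact (hψ.continuous.tendsto _).comp h0
      exact ((hcont.mono_left nhdsWithin_le_nhds).const_mul (F y)).congr (fun ε => rfl)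
  -- Step 4: the limit is zero
  have hωsupp' : HasCompactSupport ω := by
    apply HasCompactSupport.intro (isCompact_Icc : IsCompact (Icc (-1:ℝ) 1))
    intro y hy
    apply hωz
    intro hmem
    exact hy ⟨hmem.1.le, hmem.2.le⟩
  have hintω : Integrable ω := hω_smooth.continuous.integrable_of_hasCompactSupport hωsupp'
  have hF2cont : Continuous (fun y => σ₁ * ((u₀ - a + u₁ * h y) * deriv h y)) :=
    continuous_const.mul
      ((continuous_const.add (continuous_const.mul hh.continuous)).mul hderivh_cont)
  have hF2supp : HasCompactSupport (fun y => σ₁ * ((u₀ - a + u₁ * h y) * deriv h y)) := by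
    apply HasCompactSupport.intro (isCompact_Icc : IsCompact (Icc (-4:ℝ) 4))
    intro y hy
    simp only [mem_Icc, not_and_or, not_le] at hy
    have h4 : 4 < |y| := by
      rcases hy with hy | hy
      · exact lt_abs.mpr (Or.inr (by linarith))
      · exact lt_abs.mpr (Or.inl hy)
    rw [hh'z4 y h4, mul_zero, mul_zero]
  have hintF2 : Integrable (fun y => σ₁ * ((u₀ - a + u₁ * h y) * deriv h y)) :=
    hF2cont.integrable_of_hasCompactSupport hF2supp
  have hintF1 : Integrable (fun y => e' * ω (y+2)) := by
    exact (hintω.comp_add_right 2).const_mul e'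
  have hint1 : (∫ y, e' * ω (y+2)) = e' := by
    rw [integral_const_mul]
    have : (∫ y : ℝ, ω (y+2)) = ∫ y, ω y := integral_add_right_eq_self ω 2
    rw [this, hω_int, mul_one]
  -- FTC computation for the second piece
  have hG : ∀ y : ℝ, HasDerivAt (fun z => σ₁ * ((u₀ - a) * h z + u₁ * (h z)^2 / 2))
      (σ₁ * ((u₀ - a + u₁ * h y) * deriv h y)) y := by
    intro y
    have hd := (hhdiff y).hasDerivAt
    have h0 := (((hd.const_mul (u₀ - a)).add (((hd.pow 2).const_mul u₁).div_const 2)).const_mul σ₁)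
    refine h0.congr_deriv ?_
    push_cast
    ring
  have hint2 : (∫ y, σ₁ * ((u₀ - a + u₁ * h y) * deriv h y)) = -e' := by
    have hsub : ∀ y ∉ Set.Ioc (-5:ℝ) 5, σ₁ * ((u₀ - a + u₁ * h y) * deriv h y) = 0 := by
      intro y hy
      simp only [mem_Ioc, not_and_or, not_lt, not_le] at hy
      have h4 : 4 < |y| := by
        rcases hy with hy | hy
        · exact lt_abs.mpr (Or.inr (by linarith))
        · exact lt_abs.mpr (Or.inl (by linarith))
      rw [hh'z4 y h4, mul_zero, mul_zero]
    rw [← setIntegral_eq_integral_of_forall_compl_eq_zero hsub,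
      ← intervalIntegral.integral_of_le (by norm_num : (-5:ℝ) ≤ 5)]
    rw [intervalIntegral.integral_eq_sub_of_hasDerivAt (fun y _ => hG y)
      hintF2.intervalIntegrable]
    rw [hh0 5 (by norm_num), hh1 (-5) (by norm_num)]
    rw [he', ha]
    field_simp
    ring
  have hintF : (∫ y, F y) = 0 := by
    rw [hF]
    rw [integral_add hintF1 hintF2, hint1, hint2, add_neg_cancel]
  have hzero : (∫ y, F y * ψ (a*t)) = 0 := by
    rw [integral_mul_const, hintF, zero_mul]
  have final : Tendsto (fun ε : ℝ =>
        ∫ x, (deriv (fun s => σ ε x s) t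
              + u ε x t * deriv (fun y => σ ε y t) x) * ψ x)
      (nhdsWithin 0 (Set.Ioi 0)) (nhds (∫ y, F y * ψ (a*t))) :=
    Filter.Tendsto.congr'
      (by filter_upwards [self_mem_nhdsWithin] with ε hε; exact (key ε hε).symm) hmain
  rwa [hzero] at final
end
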